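/- arXiv:2505.13265 — 9 statements merged into one kernel-verified Lean document; each statement's English description precedes it below -/
import Mathlib

section
/- Let (A, ρ) be a unital C*-probability space that admits a filtration (V_n)_{n≥0} with the rapid decay property. Then the GNS representation of ρ is faithful; concretely, for every a ∈ A one has ‖a‖ = sup { ‖a·x‖₂ : x ∈ A, ‖x‖₂ ≤ 1 }. In particular, if ρ((a·x)*(a·x)) = 0 for all x ∈ A, then a = 0. -/
open scoped ComplexOrder

section Defs

variable {A : Type*} [NormedRing A] [StarRing A] [Module ℂ A]

/-- A state on a unital complex `*`-algebra: a unital positive linear functional. -/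
structure IsState (ρ : A →ₗ[ℂ] ℂ) : Prop where
  map_one : ρ 1 = 1
  nonneg : ∀ a : A, 0 ≤ ρ (star a * a)

/-- The `L²`-seminorm `‖a‖₂ = (ρ(a* a))^{1/2}` associated to a state `ρ`. -/
noncomputable def norm2 (ρ : A →ₗ[ℂ] ℂ) (a : A) : ℝ :=
  Real.sqrt (ρ (star a * a)).re

/-- A filtration of a unital complex `*`-algebra: an increasing sequence of subspaces with
`V 0 = ℂ·1`, stable under adjoints, submultiplicative, and with dense union. -/
structure IsCStarFiltration (V : ℕ → Submodule ℂ A) : Prop where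
  zero_eq : V 0 = Submodule.span ℂ ({1} : Set A)
  mono : Monotone V
  star_mem : ∀ n : ℕ, ∀ a ∈ V n, star a ∈ V n
  mul_mem : ∀ m n : ℕ, ∀ a ∈ V m, ∀ b ∈ V n, a * b ∈ V (m + n)
  dense : Dense (⋃ n : ℕ, (V n : Set A))

/-- The rapid decay inequality with explicit constants `c` and `α`:
`‖a‖ ≤ c (n+1)^α ‖a‖₂` for all `a ∈ V n`. -/
def HasRapidDecayWith (ρ : A →ₗ[ℂ] ℂ) (V : ℕ → Submodule ℂ A) (c α : ℝ) : Prop :=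
  ∀ n : ℕ, ∀ a ∈ V n, ‖a‖ ≤ c * ((n : ℝ) + 1) ^ α * norm2 ρ a

/-- The rapid decay property of a filtration. -/
def HasRapidDecay (ρ : A →ₗ[ℂ] ℂ) (V : ℕ → Submodule ℂ A) : Prop :=
  ∃ c > 0, ∃ α > 0, HasRapidDecayWith ρ V c α

end Defs


section Aux1

variable {A : Type*} [NormedRing A] [StarRing A] [CStarRing A] [CompleteSpace A]
    [NormedAlgebra ℂ A] [StarModule ℂ A]
variable {ρ : A →ₗ[ℂ] ℂ}

lemma IsState.im_eq (hρ : IsState ρ) (a : A) : (ρ (star a * a)).im = 0 := by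
  have h := hρ.nonneg a
  rw [Complex.le_def] at h
  simpa using h.2.symm

lemma IsState.re_nonneg (hρ : IsState ρ) (a : A) : 0 ≤ (ρ (star a * a)).re := by
  have h := hρ.nonneg a
  rw [Complex.le_def] at h
  simpa using h.1

lemma IsState.star_apply (hρ : IsState ρ) (a : A) :
    ρ (star a) = (starRingEnd ℂ) (ρ a) := by
  have key : ∀ b : A, (ρ b).im + (ρ (star b)).im = 0 := by
    intro b
    have h := hρ.im_eq (1 + b)
    have e : star (1 + b) * (1 + b) = 1 + b + star b + star b * b := by
      rw [star_add, star_one]; noncomm_ring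
    rw [e] at h
    have h2 := hρ.im_eq b
    simp [map_add, hρ.map_one, h2] at h
    linarith
  have k1 := key a
  have k2 := key ((Complex.I : ℂ) • a)
  rw [star_smul, map_smul, map_smul] at k2
  simp only [RCLike.star_def, Complex.conj_I, smul_eq_mul, neg_smul, map_neg,
    Complex.mul_im, Complex.I_re, Complex.I_im, Complex.neg_im, Complex.neg_re] at k2
  apply Complex.ext
  · simp only [Complex.conj_re]; linarith
  · simp only [Complex.conj_im]; linarith

lemma IsState.star_mul_apply (hρ : IsState ρ) (u v : A) :
    ρ (star v * u) = (starRingEnd ℂ) (ρ (star u * v)) := by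
  have : star v * u = star (star u * v) := by simp [star_mul]
  rw [this, hρ.star_apply]

lemma IsState.cs_re (hρ : IsState ρ) (u v : A) :
    (ρ (star u * v)).re ^ 2 ≤ (ρ (star u * u)).re * (ρ (star v * v)).re := by
  set p := (ρ (star u * u)).re
  set q := (ρ (star v * v)).re
  set z := ρ (star u * v) with hz
  have key : ∀ t : ℝ, 0 ≤ p * (t * t) + (2 * z.re) * t + q := by
    intro t
    have h := hρ.re_nonneg ((t : ℂ) • u + v)
    simp only [star_add, star_smul, add_mul, mul_add, smul_mul_assoc, mul_smul_comm, smul_smul,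
      map_add, map_smul, RCLike.star_def, Complex.conj_ofReal] at h
    rw [hρ.star_mul_apply u v] at h
    simp only [smul_eq_mul, Complex.add_re, Complex.mul_re,
      Complex.ofReal_re, Complex.ofReal_im, Complex.conj_re, Complex.conj_im,
      Complex.mul_im] at h
    ring_nf at h ⊢
    linarith
  have hd := discrim_le_zero key
  rw [discrim] at hd
  nlinarith


lemma IsState.cs_abs (hρ : IsState ρ) (u v : A) :
    ‖ρ (star u * v)‖ ≤ norm2 ρ u * norm2 ρ v := by
  set z := ρ (star u * v) with hz
  have hp := hρ.re_nonneg u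
  have hq := hρ.re_nonneg v
  rcases eq_or_ne z 0 with h0 | h0
  · rw [h0, norm_zero]
    exact mul_nonneg (Real.sqrt_nonneg _) (Real.sqrt_nonneg _)
  · have key := hρ.cs_re u ((starRingEnd ℂ) z • v)
    have e1 : star u * ((starRingEnd ℂ) z • v) = (starRingEnd ℂ) z • (star u * v) :=
      (mul_smul_comm _ _ _)
    have e2 : star ((starRingEnd ℂ) z • v) * ((starRingEnd ℂ) z • v)
        = (z * (starRingEnd ℂ) z) • (star v * v) := by
      rw [star_smul, smul_mul_assoc, mul_smul_comm, smul_smul]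
      simp
    rw [e1, e2, map_smul, map_smul] at key
    rw [Complex.mul_conj] at key
    simp only [smul_eq_mul, ← hz, Complex.mul_re, Complex.conj_re, Complex.conj_im,
      Complex.ofReal_re, Complex.ofReal_im] at key
    have hns : z.re * z.re + z.im * z.im = Complex.normSq z := by
      simp [Complex.normSq_apply]
    have hnspos : 0 < Complex.normSq z := Complex.normSq_pos.mpr h0
    have key2 : Complex.normSq z ≤ (ρ (star u * u)).re * (ρ (star v * v)).re := by
      nlinarith [key]
    have : ‖z‖ = Real.sqrt (Complex.normSq z) := by
      rw [Complex.norm_def]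
    rw [this, norm2, norm2, ← Real.sqrt_mul hp]
    exact Real.sqrt_le_sqrt key2

lemma norm2_nonneg (ρ : A →ₗ[ℂ] ℂ) (a : A) : 0 ≤ norm2 ρ a := Real.sqrt_nonneg _

lemma IsState.norm2_sq (hρ : IsState ρ) (a : A) :
    norm2 ρ a ^ 2 = (ρ (star a * a)).re := Real.sq_sqrt (hρ.re_nonneg a)

lemma norm2_zero (ρ : A →ₗ[ℂ] ℂ) : norm2 ρ 0 = 0 := by simp [norm2]

lemma IsState.norm2_one (hρ : IsState ρ) : norm2 ρ 1 = 1 := by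
  simp [norm2, hρ.map_one]

lemma IsState.norm2_smul (hρ : IsState ρ) (c : ℂ) (a : A) :
    norm2 ρ (c • a) = ‖c‖ * norm2 ρ a := by
  have e : star (c • a) * (c • a) = (c * (starRingEnd ℂ) c) • (star a * a) := by
    rw [star_smul, smul_mul_assoc, mul_smul_comm, smul_smul]
    simp [mul_comm]
  rw [norm2, e, map_smul, Complex.mul_conj]
  simp only [smul_eq_mul, Complex.mul_re, Complex.ofReal_re, Complex.ofReal_im]
  rw [show Complex.normSq c * (ρ (star a * a)).re - 0 * (ρ (star a * a)).im
      = Complex.normSq c * (ρ (star a * a)).re by ring]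
  rw [Real.sqrt_mul (Complex.normSq_nonneg c)]
  rw [show Real.sqrt (Complex.normSq c) = ‖c‖ by rw [Complex.norm_def]]
  rfl

lemma IsState.norm2_add_le (hρ : IsState ρ) (u v : A) :
    norm2 ρ (u + v) ≤ norm2 ρ u + norm2 ρ v := by
  have cs := hρ.cs_abs u v
  have h1 : (ρ (star (u + v) * (u + v))).re
      ≤ (norm2 ρ u + norm2 ρ v) ^ 2 := by
    have e : star (u + v) * (u + v) = star u * u + star u * v + star v * u + star v * v := by
      rw [star_add]; noncomm_ring
    rw [e]
    simp only [map_add, Complex.add_re]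
    rw [hρ.star_mul_apply u v]
    have hre : (ρ (star u * v)).re ≤ ‖ρ (star u * v)‖ := Complex.re_le_norm _
    have : ((starRingEnd ℂ) (ρ (star u * v))).re = (ρ (star u * v)).re := Complex.conj_re _
    rw [this]
    have e1 := hρ.norm2_sq u
    have e2 := hρ.norm2_sq v
    nlinarith [norm2_nonneg ρ u, norm2_nonneg ρ v]
  calc norm2 ρ (u + v) = Real.sqrt (ρ (star (u + v) * (u + v))).re := rfl
    _ ≤ Real.sqrt ((norm2 ρ u + norm2 ρ v) ^ 2) := Real.sqrt_le_sqrt h1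
    _ = norm2 ρ u + norm2 ρ v := by
        rw [Real.sqrt_sq (add_nonneg (norm2_nonneg ρ u) (norm2_nonneg ρ v))]


lemma IsState.conj_nonneg (hρ : IsState ρ) (y : A) {d : A}
    [PartialOrder A] [StarOrderedRing A] (hd0 : (0 : A) ≤ d) :
    0 ≤ (ρ (star y * (d * y))).re := by
  rw [StarOrderedRing.nonneg_iff] at hd0
  induction hd0 using AddSubmonoid.closure_induction with
  | mem x hx =>
    obtain ⟨s, rfl⟩ := hx
    have e : star y * (star s * s * y) = star (s * y) * (s * y) := by
      rw [star_mul]; noncomm_ring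
    rw [e]
    exact hρ.re_nonneg (s * y)
  | zero => simp
  | add x₁ x₂ h₁ h₂ ih₁ ih₂ =>
    have e : star y * ((x₁ + x₂) * y) = star y * (x₁ * y) + star y * (x₂ * y) := by
      noncomm_ring
    rw [e, map_add, Complex.add_re]
    exact add_nonneg ih₁ ih₂

lemma IsState.norm2_mul_le (hρ : IsState ρ) (a y : A) :
    norm2 ρ (a * y) ≤ ‖a‖ * norm2 ρ y := by
  letI : CStarAlgebra A := {}
  letI : PartialOrder A := CStarAlgebra.spectralOrder A
  haveI : StarOrderedRing A := CStarAlgebra.spectralOrderedRing A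
  have hd : (0 : A) ≤ algebraMap ℝ A (‖a‖ ^ 2) - star a * a :=
    sub_nonneg.mpr CStarAlgebra.star_mul_le_algebraMap_norm_sq
  have key := hρ.conj_nonneg y hd
  have e1 : star y * ((algebraMap ℝ A (‖a‖ ^ 2) - star a * a) * y)
      = (‖a‖ ^ 2 : ℝ) • (star y * y) - star (a * y) * (a * y) := by
    have hc : star y * (algebraMap ℝ A (‖a‖ ^ 2) * y) = algebraMap ℝ A (‖a‖ ^ 2) * (star y * y) := by
      rw [← mul_assoc, ← Algebra.commutes, mul_assoc]
    rw [sub_mul, mul_sub, star_mul, Algebra.smul_def, hc]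
    noncomm_ring
  rw [e1, map_sub] at key
  have e2 : ρ ((‖a‖ ^ 2 : ℝ) • (star y * y)) = ((‖a‖ ^ 2 : ℝ) : ℂ) * ρ (star y * y) := by
    rw [show ((‖a‖ ^ 2 : ℝ) • (star y * y)) = ((‖a‖ ^ 2 : ℝ) : ℂ) • (star y * y) by
      rw [Complex.coe_smul], map_smul, smul_eq_mul]
  rw [e2] at key
  simp only [Complex.sub_re, Complex.mul_re, Complex.ofReal_re, Complex.ofReal_im] at key
  have h2 : (ρ (star (a * y) * (a * y))).re ≤ ‖a‖ ^ 2 * (ρ (star y * y)).re := by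
    linarith
  calc norm2 ρ (a * y) = Real.sqrt (ρ (star (a * y) * (a * y))).re := rfl
    _ ≤ Real.sqrt (‖a‖ ^ 2 * (ρ (star y * y)).re) := Real.sqrt_le_sqrt h2
    _ = ‖a‖ * norm2 ρ y := by
        rw [Real.sqrt_mul (sq_nonneg _), Real.sqrt_sq (norm_nonneg a)]
        rfl

lemma IsState.norm2_le_norm (hρ : IsState ρ) (a : A) : norm2 ρ a ≤ ‖a‖ := by
  have := hρ.norm2_mul_le a 1
  rwa [mul_one, hρ.norm2_one, mul_one] at this


end Aux1

section GnsN

variable {A : Type*} [NormedRing A] [StarRing A] [CStarRing A] [CompleteSpace A]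
    [NormedAlgebra ℂ A] [StarModule ℂ A]

noncomputable def gnsN (ρ : A →ₗ[ℂ] ℂ) (a : A) : ℝ :=
  sSup ((fun x => norm2 ρ (a * x)) '' {x : A | norm2 ρ x ≤ 1})

variable {ρ : A →ₗ[ℂ] ℂ}

lemma IsState.gnsN_bddAbove (hρ : IsState ρ) (a : A) :
    BddAbove ((fun x => norm2 ρ (a * x)) '' {x : A | norm2 ρ x ≤ 1}) := by
  refine ⟨‖a‖, ?_⟩
  rintro r ⟨x, hx, rfl⟩
  calc norm2 ρ (a * x) ≤ ‖a‖ * norm2 ρ x := hρ.norm2_mul_le a x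
    _ ≤ ‖a‖ * 1 := by
        exact mul_le_mul_of_nonneg_left hx (norm_nonneg a)
    _ = ‖a‖ := mul_one _

lemma IsState.le_gnsN (hρ : IsState ρ) (a : A) {x : A} (hx : norm2 ρ x ≤ 1) :
    norm2 ρ (a * x) ≤ gnsN ρ a :=
  le_csSup (hρ.gnsN_bddAbove a) (Set.mem_image_of_mem _ hx)

lemma IsState.gnsN_nonneg (hρ : IsState ρ) (a : A) : 0 ≤ gnsN ρ a := by
  have h := hρ.le_gnsN a (x := 0) (by rw [norm2_zero]; norm_num)
  rw [mul_zero, norm2_zero] at h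
  exact h

lemma IsState.gnsN_le (hρ : IsState ρ) {a : A} {M : ℝ}
    (h : ∀ x : A, norm2 ρ x ≤ 1 → norm2 ρ (a * x) ≤ M) (hM : 0 ≤ M) :
    gnsN ρ a ≤ M := by
  apply Real.sSup_le _ hM
  rintro r ⟨x, hx, rfl⟩
  exact h x hx

lemma IsState.gnsN_le_norm (hρ : IsState ρ) (a : A) : gnsN ρ a ≤ ‖a‖ := by
  refine hρ.gnsN_le (fun x hx => ?_) (norm_nonneg a)
  calc norm2 ρ (a * x) ≤ ‖a‖ * norm2 ρ x := hρ.norm2_mul_le a x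
    _ ≤ ‖a‖ * 1 := mul_le_mul_of_nonneg_left hx (norm_nonneg a)
    _ = ‖a‖ := mul_one _

lemma IsState.norm2_mul_le_gnsN (hρ : IsState ρ) (a x : A) :
    norm2 ρ (a * x) ≤ gnsN ρ a * norm2 ρ x := by
  rcases eq_or_lt_of_le (norm2_nonneg ρ x) with h0 | h0
  · -- norm2 x = 0 : show norm2 (a*x) = 0
    have hz : norm2 ρ (a * x) = 0 := by
      have e : star (a * x) * (a * x) = star x * (star a * (a * x)) := by
        rw [star_mul]; noncomm_ring
      have habs := hρ.cs_abs x (star a * (a * x))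
      rw [← h0, zero_mul] at habs
      have : ρ (star x * (star a * (a * x))) = 0 :=
        norm_le_zero_iff.mp habs
      rw [norm2, e, this]
      simp
    rw [hz, ← h0, mul_zero]
  · set t := norm2 ρ x with ht
    set x' := ((t : ℂ))⁻¹ • x with hx'
    have hx'n : norm2 ρ x' = 1 := by
      rw [hx', hρ.norm2_smul]
      rw [norm_inv, Complex.norm_real, Real.norm_of_nonneg (le_of_lt h0)]
      field_simp
      exact ht.symm
    have h1 : norm2 ρ (a * x') ≤ gnsN ρ a := hρ.le_gnsN a (le_of_eq hx'n)
    have e : a * x' = ((t : ℂ))⁻¹ • (a * x) := by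
      rw [hx', mul_smul_comm]
    rw [e, hρ.norm2_smul, norm_inv, Complex.norm_real,
      Real.norm_of_nonneg (le_of_lt h0)] at h1
    calc norm2 ρ (a * x) = t * (t⁻¹ * norm2 ρ (a * x)) := by field_simp
      _ ≤ t * gnsN ρ a := mul_le_mul_of_nonneg_left h1 (le_of_lt h0)
      _ = gnsN ρ a * t := mul_comm _ _

lemma IsState.gnsN_sub_le (hρ : IsState ρ) (a b : A) :
    gnsN ρ a ≤ gnsN ρ b + ‖a - b‖ := by
  refine hρ.gnsN_le (fun x hx => ?_) (add_nonneg (hρ.gnsN_nonneg b) (norm_nonneg _))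
  have e : a * x = b * x + (a - b) * x := by noncomm_ring
  calc norm2 ρ (a * x) = norm2 ρ (b * x + (a - b) * x) := by rw [← e]
    _ ≤ norm2 ρ (b * x) + norm2 ρ ((a - b) * x) := hρ.norm2_add_le _ _
    _ ≤ gnsN ρ b + ‖a - b‖ := by
        refine add_le_add (hρ.le_gnsN b hx) ?_
        calc norm2 ρ ((a - b) * x) ≤ ‖a - b‖ * norm2 ρ x := hρ.norm2_mul_le _ _
          _ ≤ ‖a - b‖ * 1 := mul_le_mul_of_nonneg_left hx (norm_nonneg _)
          _ = ‖a - b‖ := mul_one _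

lemma IsState.gnsN_continuous (hρ : IsState ρ) : Continuous (gnsN ρ) := by
  have : LipschitzWith 1 (gnsN ρ) := by
    refine LipschitzWith.of_dist_le_mul (fun a b => ?_)
    rw [Real.dist_eq, dist_eq_norm, NNReal.coe_one, one_mul, abs_le]
    constructor
    · have := hρ.gnsN_sub_le b a
      rw [(neg_sub a b).symm, norm_neg] at this
      linarith
    · have := hρ.gnsN_sub_le a b
      linarith
  exact this.continuous

end GnsN

section Main

variable {A : Type*} [NormedRing A] [StarRing A] [CStarRing A] [CompleteSpace A]
    [NormedAlgebra ℂ A] [StarModule ℂ A]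
variable {ρ : A →ₗ[ℂ] ℂ} {V : ℕ → Submodule ℂ A}

lemma IsCStarFiltration.pow_mem (hV : IsCStarFiltration V) {m : ℕ} {h : A} (hh : h ∈ V m) :
    ∀ j : ℕ, h ^ j ∈ V (m * j) := by
  intro j
  induction j with
  | zero =>
    rw [pow_zero, Nat.mul_zero, hV.zero_eq]
    exact Submodule.subset_span rfl
  | succ j ih =>
    rw [pow_succ, Nat.mul_succ]
    exact hV.mul_mem (m * j) m (h ^ j) ih h hh

lemma IsState.norm2_pow_le (hρ : IsState ρ) (h : A) :
    ∀ j : ℕ, norm2 ρ (h ^ j) ≤ gnsN ρ h ^ j := by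
  intro j
  induction j with
  | zero => simp [hρ.norm2_one]
  | succ j ih =>
    rw [pow_succ', pow_succ']
    calc norm2 ρ (h * h ^ j) ≤ gnsN ρ h * norm2 ρ (h ^ j) := hρ.norm2_mul_le_gnsN h _
      _ ≤ gnsN ρ h * gnsN ρ h ^ j :=
          mul_le_mul_of_nonneg_left ih (hρ.gnsN_nonneg h)

lemma IsState.norm_le_gnsN_of_selfAdjoint (hρ : IsState ρ) (hV : IsCStarFiltration V)
    (hRD : HasRapidDecay ρ V) {m : ℕ} {h : A} (hsa : IsSelfAdjoint h) (hh : h ∈ V m) :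
    ‖h‖ ≤ gnsN ρ h := by
  obtain ⟨c, hc, α, hα, hRDW⟩ := hRD
  by_contra hlt
  push_neg at hlt
  have hNnn : 0 ≤ gnsN ρ h := hρ.gnsN_nonneg h
  have hpos : 0 < ‖h‖ := lt_of_le_of_lt hNnn hlt
  set s : ℝ := gnsN ρ h / ‖h‖ with hs
  have hs0 : 0 ≤ s := div_nonneg hNnn (le_of_lt hpos)
  have hs1 : s < 1 := (div_lt_one hpos).mpr hlt
  set K : ℕ := ⌈α⌉₊ with hK
  set C : ℝ := c * ((m : ℝ) + 1) ^ α with hC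
  have key : ∀ k : ℕ, 1 ≤ C * (((2 ^ k : ℕ) : ℝ) ^ K * s ^ (2 ^ k)) := by
    intro k
    have h1 : ‖h ^ 2 ^ k‖ = ‖h‖ ^ 2 ^ k := by
      have := hsa.nnnorm_pow_two_pow k
      have := congrArg NNReal.toReal this
      simpa [coe_nnnorm] using this
    have h2 : ‖h ^ 2 ^ k‖ ≤ c * ((m * 2 ^ k : ℕ) + 1 : ℝ) ^ α * norm2 ρ (h ^ 2 ^ k) :=
      hRDW (m * 2 ^ k) _ (hV.pow_mem hh (2 ^ k))
    have h3 : norm2 ρ (h ^ 2 ^ k) ≤ gnsN ρ h ^ 2 ^ k := hρ.norm2_pow_le h (2 ^ k)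
    have h4 : ((m * 2 ^ k : ℕ) + 1 : ℝ) ^ α ≤ ((m : ℝ) + 1) ^ α * ((2 ^ k : ℕ) : ℝ) ^ K := by
      have e1 : ((m * 2 ^ k : ℕ) + 1 : ℝ) ≤ ((m : ℝ) + 1) * ((2 ^ k : ℕ) : ℝ) := by
        push_cast
        have h2k : (1 : ℝ) ≤ 2 ^ k := one_le_pow₀ (by norm_num)
        nlinarith
      calc ((m * 2 ^ k : ℕ) + 1 : ℝ) ^ α ≤ (((m : ℝ) + 1) * ((2 ^ k : ℕ) : ℝ)) ^ α := by
            apply Real.rpow_le_rpow (by positivity) e1 (le_of_lt hα)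
        _ = ((m : ℝ) + 1) ^ α * ((2 ^ k : ℕ) : ℝ) ^ α := by
            rw [Real.mul_rpow (by positivity) (by positivity)]
        _ ≤ ((m : ℝ) + 1) ^ α * ((2 ^ k : ℕ) : ℝ) ^ K := by
            apply mul_le_mul_of_nonneg_left _ (by positivity)
            rw [← Real.rpow_natCast (((2 ^ k : ℕ) : ℝ)) K]
            apply Real.rpow_le_rpow_of_exponent_le _ (Nat.le_ceil α)
            exact_mod_cast Nat.one_le_two_pow
    -- combine
    have h5 : ‖h‖ ^ 2 ^ k ≤ C * (((2 ^ k : ℕ) : ℝ) ^ K * gnsN ρ h ^ 2 ^ k) := by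
      rw [← h1]
      calc ‖h ^ 2 ^ k‖ ≤ c * ((m * 2 ^ k : ℕ) + 1 : ℝ) ^ α * norm2 ρ (h ^ 2 ^ k) := h2
        _ ≤ c * (((m : ℝ) + 1) ^ α * ((2 ^ k : ℕ) : ℝ) ^ K) * (gnsN ρ h ^ 2 ^ k) := by
            apply mul_le_mul
            · exact mul_le_mul_of_nonneg_left h4 (le_of_lt hc)
            · exact h3
            · exact norm2_nonneg ρ _
            · positivity
        _ = C * (((2 ^ k : ℕ) : ℝ) ^ K * gnsN ρ h ^ 2 ^ k) := by rw [hC]; ring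
    have hpow : (0 : ℝ) < ‖h‖ ^ 2 ^ k := pow_pos hpos _
    have e2 : gnsN ρ h ^ 2 ^ k / ‖h‖ ^ 2 ^ k = s ^ 2 ^ k := by
      rw [hs, div_pow]
    calc (1 : ℝ) ≤ C * (((2 ^ k : ℕ) : ℝ) ^ K * gnsN ρ h ^ 2 ^ k) / ‖h‖ ^ 2 ^ k := by
          rw [le_div_iff₀ hpow, one_mul]
          exact h5
      _ = C * (((2 ^ k : ℕ) : ℝ) ^ K * (gnsN ρ h ^ 2 ^ k / ‖h‖ ^ 2 ^ k)) := by ring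
      _ = C * (((2 ^ k : ℕ) : ℝ) ^ K * s ^ (2 ^ k)) := by rw [e2]
  have T : Filter.Tendsto (fun k : ℕ => C * (((2 ^ k : ℕ) : ℝ) ^ K * s ^ (2 ^ k)))
      Filter.atTop (nhds (C * 0)) := by
    apply Filter.Tendsto.const_mul
    have T0 := tendsto_pow_const_mul_const_pow_of_lt_one K hs0 hs1
    have T1 : Filter.Tendsto (fun k : ℕ => (2 ^ k : ℕ)) Filter.atTop Filter.atTop :=
      tendsto_pow_atTop_atTop_of_one_lt one_lt_two
    exact T0.comp T1
  have : (1 : ℝ) ≤ C * 0 := ge_of_tendsto' T key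
  rw [mul_zero] at this
  linarith

lemma IsState.norm_le_gnsN (hρ : IsState ρ) (hV : IsCStarFiltration V)
    (hRD : HasRapidDecay ρ V) {n : ℕ} {a : A} (ha : a ∈ V n) :
    ‖a‖ ≤ gnsN ρ a := by
  rcases eq_or_lt_of_le (norm_nonneg a) with h0 | h0
  · rw [← h0]; exact hρ.gnsN_nonneg a
  · have hh : star a * a ∈ V (n + n) :=
      hV.mul_mem n n (star a) (hV.star_mem n a ha) a ha
    have hsa : IsSelfAdjoint (star a * a) := by
      rw [IsSelfAdjoint, star_mul, star_star]
    have h1 : ‖star a * a‖ ≤ gnsN ρ (star a * a) :=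
      hρ.norm_le_gnsN_of_selfAdjoint hV hRD hsa hh
    have h2 : gnsN ρ (star a * a) ≤ ‖a‖ * gnsN ρ a := by
      refine hρ.gnsN_le (fun x hx => ?_)
        (mul_nonneg (norm_nonneg a) (hρ.gnsN_nonneg a))
      have e : star a * a * x = star a * (a * x) := mul_assoc _ _ _
      calc norm2 ρ (star a * a * x) = norm2 ρ (star a * (a * x)) := by rw [e]
        _ ≤ ‖star a‖ * norm2 ρ (a * x) := hρ.norm2_mul_le _ _
        _ = ‖a‖ * norm2 ρ (a * x) := by rw [norm_star]
        _ ≤ ‖a‖ * gnsN ρ a :=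
            mul_le_mul_of_nonneg_left (hρ.le_gnsN a hx) (norm_nonneg a)
    have h3 : ‖a‖ * ‖a‖ ≤ ‖a‖ * gnsN ρ a := by
      rw [← CStarRing.norm_star_mul_self]
      exact le_trans h1 h2
    exact le_of_mul_le_mul_left h3 h0

end Main

/-- If a unital C*-probability space `(A, ρ)` admits a filtration with the
rapid decay property, then the GNS representation of `ρ` is faithful: for every `a ∈ A`,
`‖a‖ = sup { ‖a·x‖₂ : ‖x‖₂ ≤ 1 }`; in particular, if `ρ((a·x)*(a·x)) = 0` for all `x`,
then `a = 0`. -/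
theorem rapidDecay_faithful_GNS
    {A : Type*} [NormedRing A] [StarRing A] [CStarRing A] [CompleteSpace A]
    [NormedAlgebra ℂ A] [StarModule ℂ A]
    (ρ : A →ₗ[ℂ] ℂ) (hρ : IsState ρ)
    (V : ℕ → Submodule ℂ A) (hV : IsCStarFiltration V) (hRD : HasRapidDecay ρ V) :
    ∀ a : A,
      ‖a‖ = sSup ((fun x => norm2 ρ (a * x)) '' {x : A | norm2 ρ x ≤ 1}) ∧
      ((∀ x : A, ρ (star (a * x) * (a * x)) = 0) → a = 0) := by
  have hEq : ∀ b : A, ‖b‖ = gnsN ρ b := by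
    have hfg : (fun b : A => ‖b‖) = gnsN ρ := by
      refine Continuous.ext_on hV.dense continuous_norm hρ.gnsN_continuous ?_
      rintro b hb
      rw [Set.mem_iUnion] at hb
      obtain ⟨n, hn⟩ := hb
      exact le_antisymm (hρ.norm_le_gnsN hV hRD hn) (hρ.gnsN_le_norm b)
    exact fun b => congrFun hfg b
  intro a
  refine ⟨hEq a, fun hx => ?_⟩
  have hle : ‖a‖ ≤ 0 := by
    rw [hEq a]
    refine hρ.gnsN_le (fun x _ => ?_) le_rfl
    rw [norm2, hx x]
    simp
  exact norm_le_zero_iff.mp hle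
end

section
/- Let (A, ρ) be a unital C*-probability space and let (V_n)_{n≥0} be a filtration of A with the rapid decay property, with constants c, α > 0 (so ‖a‖ ≤ c(n+1)^α ‖a‖₂ for a ∈ V_n). Then the C*-norm closures (cl(V_n))_{n≥0} again form a filtration of A having the rapid decay property with the same constants c, α; moreover each cl(V_n) is complete with respect to ‖·‖₂ (every ‖·‖₂-Cauchy sequence in cl(V_n) converges in the C*-norm to an element of cl(V_n)). -/
open scoped ComplexOrder

section Defs

variable {A : Type*} [NormedRing A] [StarRing A] [Module ℂ A]

/-- A filtration of a unital complex `*`-algebra: an increasing sequence of subspaces with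
`V 0 = ℂ·1`, stable under adjoints, submultiplicative, and with dense union. -/
structure IsFiltrationRD (V : ℕ → Submodule ℂ A) : Prop where
  zero_eq : V 0 = Submodule.span ℂ ({1} : Set A)
  mono : Monotone V
  star_mem : ∀ n : ℕ, ∀ a ∈ V n, star a ∈ V n
  mul_mem : ∀ m n : ℕ, ∀ a ∈ V m, ∀ b ∈ V n, a * b ∈ V (m + n)
  dense : Dense (⋃ n : ℕ, (V n : Set A))

end Defs

section Aux

variable {A : Type*} [NormedRing A] [StarRing A] [CStarRing A] [CompleteSpace A]
    [NormedAlgebra ℂ A] [StarModule ℂ A]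

/-- A state is bounded on self-adjoint elements: `‖ρ d‖ ≤ ‖d‖`. -/
lemma aux_rho_le (ρ : A →ₗ[ℂ] ℂ) (hρ : IsState ρ) {d : A} (hd : IsSelfAdjoint d) :
    ‖ρ d‖ ≤ ‖d‖ := by
  letI : CStarAlgebra A := {}
  letI := CStarAlgebra.spectralOrder A
  haveI := CStarAlgebra.spectralOrderedRing A
  have hmono : ∀ x : A, 0 ≤ x → 0 ≤ ρ x := by
    intro x hx
    rw [StarOrderedRing.nonneg_iff] at hx
    induction hx using AddSubmonoid.closure_induction with
    | mem y hy => obtain ⟨s, rfl⟩ := hy; exact hρ.nonneg s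
    | zero => simp
    | add y z _ _ hy hz => rw [map_add]; exact add_nonneg hy hz
  have halg : ∀ t : ℝ, ρ (algebraMap ℝ A t) = (t : ℂ) := by
    intro t
    rw [Algebra.algebraMap_eq_smul_one, ← Complex.coe_smul, map_smul, hρ.map_one, smul_eq_mul,
      mul_one]
  have h1 : 0 ≤ ρ (algebraMap ℝ A ‖d‖ - d) :=
    hmono _ (by simpa using sub_nonneg.mpr hd.le_algebraMap_norm_self)
  have h2 : 0 ≤ ρ (d - (-(algebraMap ℝ A ‖d‖))) :=
    hmono _ (by simpa using sub_nonneg.mpr hd.neg_algebraMap_norm_le_self)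
  rw [map_sub, halg, Complex.le_def] at h1
  rw [map_sub, map_neg, halg, Complex.le_def] at h2
  simp only [Complex.zero_re, Complex.zero_im, Complex.sub_re, Complex.sub_im,
    Complex.ofReal_re, Complex.ofReal_im, Complex.neg_re, Complex.neg_im] at h1 h2
  have him : (ρ d).im = 0 := by linarith [h1.2, h2.2]
  have : ρ d = ((ρ d).re : ℂ) := Complex.ext rfl (by simp [him])
  rw [this, Complex.norm_real, Real.norm_eq_abs, abs_le]
  constructor <;> linarith [h1.1, h2.1]

/-- A state is bounded: `‖ρ a‖ ≤ 2 ‖a‖`. -/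
lemma aux_rho_bound (ρ : A →ₗ[ℂ] ℂ) (hρ : IsState ρ) (a : A) : ‖ρ a‖ ≤ 2 * ‖a‖ := by
  set x : A := ((2 : ℂ)⁻¹) • (a + star a) with hx
  set y : A := ((2 : ℂ)⁻¹ * Complex.I) • (star a - a) with hy
  have hxs : IsSelfAdjoint x := by
    rw [IsSelfAdjoint, hx, star_smul, star_add, star_star]
    simp [add_comm]
  have hys : IsSelfAdjoint y := by
    rw [IsSelfAdjoint, hy, star_smul, star_sub, star_star]
    have h1 : star ((2 : ℂ)⁻¹ * Complex.I) = -((2 : ℂ)⁻¹ * Complex.I) := by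
      rw [Complex.star_def, map_mul, Complex.conj_I, map_inv₀, Complex.conj_ofNat]
      ring
    rw [h1, ← neg_sub (star a) a, smul_neg, neg_smul, neg_neg]
  have hdecomp : a = x + Complex.I • y := by
    rw [hx, hy, smul_smul]
    have h2 : Complex.I * ((2 : ℂ)⁻¹ * Complex.I) = -(2 : ℂ)⁻¹ := by
      rw [mul_comm ((2 : ℂ)⁻¹) Complex.I, ← mul_assoc, Complex.I_mul_I]
      ring
    rw [h2, neg_smul, ← neg_sub a (star a), smul_neg, neg_neg, ← smul_add]
    rw [show a + star a + (a - star a) = a + a by abel, ← two_smul ℂ a, smul_smul]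
    norm_num
  have hsplit : ρ a = ρ x + Complex.I * ρ y := by
    rw [hdecomp, map_add]
    congr 1
    rw [map_smul, smul_eq_mul]
  have hxn : ‖x‖ ≤ ‖a‖ := by
    rw [hx, norm_smul]
    calc ‖(2 : ℂ)⁻¹‖ * ‖a + star a‖ ≤ (1 / 2) * (‖a‖ + ‖star a‖) := by
          rw [show ‖((2 : ℂ)⁻¹)‖ = 1 / 2 by simp]
          exact mul_le_mul_of_nonneg_left (norm_add_le _ _) (by norm_num)
      _ = ‖a‖ := by rw [norm_star]; ring
  have hyn : ‖y‖ ≤ ‖a‖ := by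
    rw [hy, norm_smul]
    calc ‖(2 : ℂ)⁻¹ * Complex.I‖ * ‖star a - a‖ ≤ (1 / 2) * (‖star a‖ + ‖a‖) := by
          rw [show ‖((2 : ℂ)⁻¹ * Complex.I)‖ = 1 / 2 by simp]
          exact mul_le_mul_of_nonneg_left (norm_sub_le _ _) (by norm_num)
      _ = ‖a‖ := by rw [norm_star]; ring
  calc ‖ρ a‖ = ‖ρ x + Complex.I * ρ y‖ := by rw [hsplit]
    _ ≤ ‖ρ x‖ + ‖Complex.I * ρ y‖ := norm_add_le _ _
    _ = ‖ρ x‖ + ‖ρ y‖ := by rw [norm_mul, Complex.norm_I, one_mul]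
    _ ≤ ‖x‖ + ‖y‖ := add_le_add (aux_rho_le ρ hρ hxs) (aux_rho_le ρ hρ hys)
    _ ≤ 2 * ‖a‖ := by linarith

/-- The `L²`-seminorm is dominated by the C*-norm. -/
lemma aux_norm2_le (ρ : A →ₗ[ℂ] ℂ) (hρ : IsState ρ) (a : A) : norm2 ρ a ≤ ‖a‖ := by
  have h1 : ‖ρ (star a * a)‖ ≤ ‖star a * a‖ := aux_rho_le ρ hρ (IsSelfAdjoint.star_mul_self a)
  have h2 : (ρ (star a * a)).re ≤ ‖a‖ ^ 2 := by
    calc (ρ (star a * a)).re ≤ ‖ρ (star a * a)‖ := Complex.re_le_norm _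
      _ ≤ ‖star a * a‖ := h1
      _ = ‖a‖ ^ 2 := by rw [CStarRing.norm_star_mul_self, sq]
  calc norm2 ρ a ≤ Real.sqrt (‖a‖ ^ 2) := Real.sqrt_le_sqrt h2
    _ = ‖a‖ := Real.sqrt_sq (norm_nonneg a)

end Aux

/-- If `(V n)` is a filtration of `(A, ρ)` with the rapid decay property with
constants `c, α`, then the C*-norm closures `(cl (V n))` again form a filtration with the rapid
decay property with the same constants, and each `cl (V n)` is complete with respect to the
`L²`-seminorm `‖·‖₂`. -/
theorem closure_filtration_rapidDecay
    {A : Type*} [NormedRing A] [StarRing A] [CStarRing A] [CompleteSpace A]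
    [NormedAlgebra ℂ A] [StarModule ℂ A]
    (ρ : A →ₗ[ℂ] ℂ) (hρ : IsState ρ)
    (V : ℕ → Submodule ℂ A) (hV : IsFiltrationRD V)
    (c α : ℝ) (hc : 0 < c) (hα : 0 < α) (hRD : HasRapidDecayWith ρ V c α) :
    IsFiltrationRD (fun n => (V n).topologicalClosure) ∧
    HasRapidDecayWith ρ (fun n => (V n).topologicalClosure) c α ∧
    (∀ n : ℕ, ∀ u : ℕ → A, (∀ k, u k ∈ (V n).topologicalClosure) →
      (∀ ε > (0 : ℝ), ∃ N : ℕ, ∀ p ≥ N, ∀ q ≥ N, norm2 ρ (u p - u q) < ε) →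
      ∃ a ∈ (V n).topologicalClosure,
        Filter.Tendsto (fun k => ‖u k - a‖) Filter.atTop (nhds 0)) := by
  have hρc : Continuous ρ := AddMonoidHomClass.continuous_of_bound ρ 2 (aux_rho_bound ρ hρ)
  have hn2c : Continuous (norm2 ρ) := by
    unfold norm2
    exact (Complex.continuous_re.comp (hρc.comp (continuous_star.mul continuous_id))).sqrt
  have hmemcl : ∀ n : ℕ, ∀ a : A, a ∈ (V n).topologicalClosure ↔ a ∈ closure (V n : Set A) := by
    intro n a; rfl
  -- rapid decay on the closures
  have hRD' : HasRapidDecayWith ρ (fun n => (V n).topologicalClosure) c α := by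
    intro n a ha
    have ha' : a ∈ closure (V n : Set A) := (hmemcl n a).mp ha
    obtain ⟨u, hu, hul⟩ := mem_closure_iff_seq_limit.mp ha'
    refine le_of_tendsto_of_tendsto' hul.norm
      (Filter.Tendsto.const_mul (c * ((n : ℝ) + 1) ^ α) ((hn2c.tendsto a).comp hul)) ?_
    intro k
    exact hRD n (u k) (hu k)
  refine ⟨⟨?_, ?_, ?_, ?_, ?_⟩, hRD', ?_⟩
  · -- zero_eq
    show (V 0).topologicalClosure = Submodule.span ℂ ({1} : Set A)
    rw [hV.zero_eq]
    haveI : FiniteDimensional ℂ (Submodule.span ℂ ({1} : Set A)) :=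
      FiniteDimensional.span_of_finite ℂ (Set.finite_singleton 1)
    exact IsClosed.submodule_topologicalClosure_eq (Submodule.closed_of_finiteDimensional _)
  · -- mono
    exact fun m n h => Submodule.topologicalClosure_mono (hV.mono h)
  · -- star_mem
    intro n a ha
    exact (hmemcl n (star a)).mpr <|
      map_mem_closure continuous_star ((hmemcl n a).mp ha) (fun x hx => hV.star_mem n x hx)
  · -- mul_mem
    intro m n a ha b hb
    exact (hmemcl (m + n) (a * b)).mpr <|
      map_mem_closure₂ continuous_mul ((hmemcl m a).mp ha) ((hmemcl n b).mp hb)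
        (fun x hx y hy => hV.mul_mem m n x hx y hy)
  · -- dense
    refine hV.dense.mono (Set.iUnion_mono fun n => ?_)
    exact subset_closure
  · -- completeness
    intro n u hu hcau
    have hC : (0 : ℝ) < c * ((n : ℝ) + 1) ^ α := by positivity
    have hcs : CauchySeq u := by
      rw [Metric.cauchySeq_iff]
      intro ε hε
      obtain ⟨N, hN⟩ := hcau (ε / (c * ((n : ℝ) + 1) ^ α)) (by positivity)
      refine ⟨N, fun p hp q hq => ?_⟩
      have h1 := hRD' n (u p - u q) (Submodule.sub_mem _ (hu p) (hu q))
      have h2 := hN p hp q hq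
      rw [dist_eq_norm]
      calc ‖u p - u q‖ ≤ c * ((n : ℝ) + 1) ^ α * norm2 ρ (u p - u q) := h1
        _ < c * ((n : ℝ) + 1) ^ α * (ε / (c * ((n : ℝ) + 1) ^ α)) :=
            mul_lt_mul_of_pos_left h2 hC
        _ = ε := by field_simp
    obtain ⟨a, hla⟩ := cauchySeq_tendsto_of_complete hcs
    refine ⟨a, ?_, ?_⟩
    · exact (Submodule.isClosed_topologicalClosure (V n)).mem_of_tendsto hla
        (Filter.Eventually.of_forall hu)
    · exact tendsto_iff_norm_sub_tendsto_zero.mp hla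
end

section
/- Let (A, ρ) be a unital C*-probability space and let (V_n)_{n≥0} be a filtration of A with the rapid decay property, with constants c, α > 0 (so ‖a‖ ≤ c(n+1)^α ‖a‖₂ on V_n). Let (a_k)_{k≥0} be a sequence with a_k ∈ V_k for every k, and suppose that Σ_{k=0}^∞ (k+1)^{2(α+1)} ‖a_k‖₂² < ∞. Then the series Σ_{k=0}^∞ a_k converges in the C*-norm of A. -/
open scoped ComplexOrder

/-- In a unital C*-probability space with a filtration having the rapid decay
property with constants `c, α`, any sequence `a k ∈ V k` with
`Σ (k+1)^{2(α+1)} ‖a k‖₂² < ∞` has a C*-norm convergent series `Σ a k`. -/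
theorem rapidDecay_series_converges
    {A : Type*} [NormedRing A] [StarRing A] [CStarRing A] [CompleteSpace A]
    [NormedAlgebra ℂ A] [StarModule ℂ A]
    (ρ : A →ₗ[ℂ] ℂ) (hρ : IsState ρ)
    (V : ℕ → Submodule ℂ A) (hV : IsCStarFiltration V)
    (c α : ℝ) (hc : 0 < c) (hα : 0 < α) (hRD : HasRapidDecayWith ρ V c α)
    (a : ℕ → A) (ha : ∀ k : ℕ, a k ∈ V k)
    (hsum : Summable (fun k : ℕ => ((k : ℝ) + 1) ^ (2 * (α + 1)) * (norm2 ρ (a k)) ^ 2)) :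
    ∃ s : A, Filter.Tendsto (fun N : ℕ => ∑ k ∈ Finset.range N, a k)
      Filter.atTop (nhds s) := by
  have hn2 : ∀ b : A, 0 ≤ norm2 ρ b := fun b => Real.sqrt_nonneg _
  have key : ∀ k : ℕ, ‖a k‖ ≤
      c * ((((k:ℝ)+1)^(2*(α+1)) * (norm2 ρ (a k))^2 + (1/((k:ℝ)+1))^2)/2) := by
    intro k
    refine (hRD k (a k) (ha k)).trans ?_
    rw [mul_assoc]
    refine mul_le_mul_of_nonneg_left ?_ hc.le
    set t := norm2 ρ (a k) with htdef
    have ht := hn2 (a k)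
    have hk : (0:ℝ) < (k:ℝ)+1 := by positivity
    set x := ((k:ℝ)+1)^(α+1) * t with hx
    set y := 1/((k:ℝ)+1) with hy
    have hxy : x * y = ((k:ℝ)+1)^α * t := by
      rw [hx, hy, Real.rpow_add hk, Real.rpow_one]
      field_simp
    have h2 := two_mul_le_add_sq x y
    have hx2 : x^2 = ((k:ℝ)+1)^(2*(α+1)) * t^2 := by
      rw [hx, mul_pow, ← Real.rpow_natCast (((k:ℝ)+1)^(α+1)) 2, ← Real.rpow_mul hk.le,
        mul_comm (α+1)]
      norm_num
    rw [← hxy, ← hx2]; linarith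
  have hs2 : Summable (fun k : ℕ => (1/((k:ℝ)+1))^2) := by
    have h := (summable_nat_add_iff (f := fun n : ℕ => 1/(n:ℝ)^2) 1).2
      (Real.summable_one_div_nat_pow.2 (by norm_num))
    refine h.congr fun k => ?_
    push_cast
    rw [div_pow]
    norm_num
  have hnorm : Summable (fun k : ℕ => ‖a k‖) := by
    refine Summable.of_nonneg_of_le (fun k => norm_nonneg _) key ?_
    exact ((hsum.add hs2).div_const 2).mul_left c
  exact ⟨∑' k, a k, hnorm.of_norm.hasSum.tendsto_sum_nat⟩
end

section
/- Let (A₁, ρ₁) and (A₂, ρ₂) be unital C*-probability spaces with filtrations (V_{n,1})_{n≥0} and (V_{n,2})_{n≥0} having the rapid decay property, and let 0 < α < 1. Equip the direct sum C*-algebra A₁ ⊕ A₂, with norm ‖(a₁, a₂)‖ = max(‖a₁‖, ‖a₂‖), with the state ρ(a₁, a₂) = α ρ₁(a₁) + (1−α) ρ₂(a₂). Then the subspaces V₀ = ℂ·(1,1) and V_n = V_{n,1} ⊕ V_{n,2} for n ≥ 1 form a filtration of A₁ ⊕ A₂ with the rapid decay property. -/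
open scoped ComplexOrder

section Defs

variable {A : Type*} [NormedRing A] [StarRing A] [Module ℂ A]

/-- A filtration of a unital complex `*`-algebra: an increasing sequence of subspaces with
`V 0 = ℂ·1`, stable under adjoints, submultiplicative, and with dense union. -/
structure IsStarFiltration (V : ℕ → Submodule ℂ A) : Prop where
  zero_eq : V 0 = Submodule.span ℂ ({1} : Set A)
  mono : Monotone V
  star_mem : ∀ n : ℕ, ∀ a ∈ V n, star a ∈ V n
  mul_mem : ∀ m n : ℕ, ∀ a ∈ V m, ∀ b ∈ V n, a * b ∈ V (m + n)
  dense : Dense (⋃ n : ℕ, (V n : Set A))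

end Defs

set_option maxHeartbeats 1000000 in
/-- Direct sums preserve the rapid decay property: if `(A₁, ρ₁)` and
`(A₂, ρ₂)` have filtrations with rapid decay and `0 < α < 1`, then `A₁ ⊕ A₂` (with the sup
norm) equipped with the state `α ρ₁ + (1-α) ρ₂` has the filtration `V 0 = ℂ·1`,
`V n = V_{n,1} ⊕ V_{n,2}` (`n ≥ 1`) with the rapid decay property. -/
theorem rapidDecay_directSum
    {A₁ A₂ : Type*}
    [NormedRing A₁] [StarRing A₁] [CStarRing A₁] [CompleteSpace A₁]
    [NormedAlgebra ℂ A₁] [StarModule ℂ A₁]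
    [NormedRing A₂] [StarRing A₂] [CStarRing A₂] [CompleteSpace A₂]
    [NormedAlgebra ℂ A₂] [StarModule ℂ A₂]
    (ρ₁ : A₁ →ₗ[ℂ] ℂ) (ρ₂ : A₂ →ₗ[ℂ] ℂ) (hρ₁ : IsState ρ₁) (hρ₂ : IsState ρ₂)
    (V₁ : ℕ → Submodule ℂ A₁) (V₂ : ℕ → Submodule ℂ A₂)
    (hV₁ : IsStarFiltration V₁) (hV₂ : IsStarFiltration V₂)
    (hRD₁ : HasRapidDecay ρ₁ V₁) (hRD₂ : HasRapidDecay ρ₂ V₂)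
    (α : ℝ) (hα₀ : 0 < α) (hα₁ : α < 1) :
    IsStarFiltration (fun n => if n = 0 then Submodule.span ℂ ({1} : Set (A₁ × A₂))
      else (V₁ n).prod (V₂ n)) ∧
    HasRapidDecay
      ((α : ℂ) • ρ₁.comp (LinearMap.fst ℂ A₁ A₂) +
        ((1 - α : ℝ) : ℂ) • ρ₂.comp (LinearMap.snd ℂ A₁ A₂))
      (fun n => if n = 0 then Submodule.span ℂ ({1} : Set (A₁ × A₂))
        else (V₁ n).prod (V₂ n)) := by
  set ρ : (A₁ × A₂) →ₗ[ℂ] ℂ :=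
    (α : ℂ) • ρ₁.comp (LinearMap.fst ℂ A₁ A₂) +
      ((1 - α : ℝ) : ℂ) • ρ₂.comp (LinearMap.snd ℂ A₁ A₂) with hρdef
  set W : ℕ → Submodule ℂ (A₁ × A₂) := fun n =>
    if n = 0 then Submodule.span ℂ ({1} : Set (A₁ × A₂)) else (V₁ n).prod (V₂ n) with hWdef
  have hone₁ : ∀ n : ℕ, (1 : A₁) ∈ V₁ n := by
    intro n
    have : (1 : A₁) ∈ V₁ 0 := by
      rw [hV₁.zero_eq]; exact Submodule.mem_span_singleton_self 1
    exact hV₁.mono (Nat.zero_le n) this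
  have hone₂ : ∀ n : ℕ, (1 : A₂) ∈ V₂ n := by
    intro n
    have : (1 : A₂) ∈ V₂ 0 := by
      rw [hV₂.zero_eq]; exact Submodule.mem_span_singleton_self 1
    exact hV₂.mono (Nat.zero_le n) this
  have hW0le : ∀ n : ℕ, Submodule.span ℂ ({1} : Set (A₁ × A₂)) ≤ (V₁ n).prod (V₂ n) := by
    intro n
    rw [Submodule.span_le, Set.singleton_subset_iff]
    exact ⟨hone₁ n, hone₂ n⟩
  have hmono : Monotone W := by
    intro m n hmn
    simp only [hWdef]
    by_cases hm : m = 0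
    · subst hm
      by_cases hn : n = 0
      · subst hn; simp
      · simp only [if_pos rfl, if_neg hn]
        exact hW0le n
    · have hn : n ≠ 0 := by omega
      simp only [if_neg hm, if_neg hn]
      intro x hx
      rw [Submodule.mem_prod] at hx ⊢
      exact ⟨hV₁.mono hmn hx.1, hV₂.mono hmn hx.2⟩
  have hfil : IsStarFiltration W := by
    refine ⟨by simp [hWdef], hmono, ?_, ?_, ?_⟩
    · -- star_mem
      intro n a ha
      simp only [hWdef] at ha ⊢
      by_cases hn : n = 0
      · simp only [if_pos hn] at ha ⊢
        rw [Submodule.mem_span_singleton] at ha ⊢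
        obtain ⟨c, rfl⟩ := ha
        exact ⟨star c, by rw [star_smul, star_one]⟩
      · simp only [if_neg hn, Submodule.mem_prod] at ha ⊢
        exact ⟨hV₁.star_mem n _ ha.1, hV₂.star_mem n _ ha.2⟩
    · -- mul_mem
      intro m n a ha b hb
      simp only [hWdef] at ha hb ⊢
      by_cases hm : m = 0
      · subst hm
        rw [if_pos rfl, Submodule.mem_span_singleton] at ha
        obtain ⟨c, rfl⟩ := ha
        by_cases hn : n = 0
        · subst hn
          rw [if_pos rfl, Submodule.mem_span_singleton] at hb ⊢
          obtain ⟨d, rfl⟩ := hb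
          exact ⟨c * d, by rw [smul_mul_smul_comm, one_mul]⟩
        · simp only [Nat.zero_add, if_neg hn] at hb ⊢
          have : (c • (1 : A₁ × A₂)) * b = c • b := by
            rw [smul_mul_assoc, one_mul]
          rw [this]
          exact Submodule.smul_mem _ _ hb
      · have hmn : m + n ≠ 0 := by omega
        simp only [if_neg hm, if_neg hmn] at ha ⊢
        by_cases hn : n = 0
        · subst hn
          rw [if_pos rfl, Submodule.mem_span_singleton] at hb
          obtain ⟨c, rfl⟩ := hb
          have : a * (c • (1 : A₁ × A₂)) = c • a := by
            rw [mul_smul_comm, mul_one]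
          rw [this]
          exact Submodule.smul_mem _ _ (by simpa using ha)
        · simp only [if_neg hn] at hb
          rw [Submodule.mem_prod] at ha hb ⊢
          exact ⟨hV₁.mul_mem m n _ ha.1 _ hb.1, hV₂.mul_mem m n _ ha.2 _ hb.2⟩
    · -- dense
      have hsub : (⋃ n : ℕ, (V₁ n : Set A₁)) ×ˢ (⋃ n : ℕ, (V₂ n : Set A₂)) ⊆
          ⋃ n : ℕ, (W n : Set (A₁ × A₂)) := by
        rintro ⟨x, y⟩ ⟨hx, hy⟩
        simp only [Set.mem_iUnion] at hx hy ⊢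
        obtain ⟨m, hm⟩ := hx
        obtain ⟨k, hk⟩ := hy
        refine ⟨max m k + 1, ?_⟩
        simp only [hWdef, if_neg (Nat.succ_ne_zero _)]
        rw [SetLike.mem_coe, Submodule.mem_prod]
        exact ⟨hV₁.mono (by omega) hm, hV₂.mono (by omega) hk⟩
      exact (hV₁.dense.prod hV₂.dense).mono hsub
  refine ⟨hfil, ?_⟩
  -- rapid decay
  obtain ⟨c₁, hc₁, β₁, hβ₁, h₁⟩ := hRD₁
  obtain ⟨c₂, hc₂, β₂, hβ₂, h₂⟩ := hRD₂
  have hα' : (0 : ℝ) < 1 - α := by linarith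
  set β : ℝ := max β₁ β₂ with hβdef
  have hβpos : 0 < β := lt_of_lt_of_le hβ₁ (le_max_left _ _)
  set C : ℝ := max (c₁ / Real.sqrt α) (c₂ / Real.sqrt (1 - α)) with hCdef
  have hCpos : 0 < C :=
    lt_of_lt_of_le (div_pos hc₁ (Real.sqrt_pos.mpr hα₀)) (le_max_left _ _)
  -- key estimate on products
  have key : ∀ n : ℕ, ∀ a : A₁ × A₂, a ∈ (V₁ n).prod (V₂ n) →
      ‖a‖ ≤ C * ((n : ℝ) + 1) ^ β * norm2 ρ a := by
    intro n a ha
    rw [Submodule.mem_prod] at ha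
    obtain ⟨ha₁, ha₂⟩ := ha
    -- compute norm2 ρ a
    have hρa : (ρ (star a * a)).re =
        α * (ρ₁ (star a.1 * a.1)).re + (1 - α) * (ρ₂ (star a.2 * a.2)).re := by
      have : star a * a = (star a.1 * a.1, star a.2 * a.2) := rfl
      rw [this]
      simp [hρdef, Complex.add_re, smul_eq_mul]
    have hr₁ : 0 ≤ (ρ₁ (star a.1 * a.1)).re :=
      (Complex.nonneg_iff.mp (hρ₁.nonneg a.1)).1
    have hr₂ : 0 ≤ (ρ₂ (star a.2 * a.2)).re :=
      (Complex.nonneg_iff.mp (hρ₂.nonneg a.2)).1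
    have hs₁ : norm2 ρ₁ a.1 ≤ norm2 ρ a / Real.sqrt α := by
      rw [le_div_iff₀ (Real.sqrt_pos.mpr hα₀)]
      rw [norm2, norm2, mul_comm, ← Real.sqrt_mul hα₀.le, hρa]
      exact Real.sqrt_le_sqrt (by nlinarith)
    have hs₂ : norm2 ρ₂ a.2 ≤ norm2 ρ a / Real.sqrt (1 - α) := by
      rw [le_div_iff₀ (Real.sqrt_pos.mpr hα')]
      rw [norm2, norm2, mul_comm, ← Real.sqrt_mul hα'.le, hρa]
      exact Real.sqrt_le_sqrt (by nlinarith)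
    have hnorm2nonneg : 0 ≤ norm2 ρ a := Real.sqrt_nonneg _
    have hpow : ∀ γ : ℝ, γ ≤ β → ((n : ℝ) + 1) ^ γ ≤ ((n : ℝ) + 1) ^ β := by
      intro γ hγ
      exact Real.rpow_le_rpow_of_exponent_le (by push_cast; linarith [Nat.cast_nonneg (α := ℝ) n]) hγ
    have hbd₁ : ‖a.1‖ ≤ C * ((n : ℝ) + 1) ^ β * norm2 ρ a := by
      calc ‖a.1‖ ≤ c₁ * ((n : ℝ) + 1) ^ β₁ * norm2 ρ₁ a.1 := h₁ n a.1 ha₁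
        _ ≤ c₁ * ((n : ℝ) + 1) ^ β₁ * (norm2 ρ a / Real.sqrt α) := by
            apply mul_le_mul_of_nonneg_left hs₁
            positivity
        _ = (c₁ / Real.sqrt α) * ((n : ℝ) + 1) ^ β₁ * norm2 ρ a := by ring
        _ ≤ C * ((n : ℝ) + 1) ^ β * norm2 ρ a := by
            apply mul_le_mul_of_nonneg_right _ hnorm2nonneg
            apply mul_le_mul (le_max_left _ _) (hpow β₁ (le_max_left _ _)) (by positivity)
              hCpos.le
    have hbd₂ : ‖a.2‖ ≤ C * ((n : ℝ) + 1) ^ β * norm2 ρ a := by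
      calc ‖a.2‖ ≤ c₂ * ((n : ℝ) + 1) ^ β₂ * norm2 ρ₂ a.2 := h₂ n a.2 ha₂
        _ ≤ c₂ * ((n : ℝ) + 1) ^ β₂ * (norm2 ρ a / Real.sqrt (1 - α)) := by
            apply mul_le_mul_of_nonneg_left hs₂
            positivity
        _ = (c₂ / Real.sqrt (1 - α)) * ((n : ℝ) + 1) ^ β₂ * norm2 ρ a := by ring
        _ ≤ C * ((n : ℝ) + 1) ^ β * norm2 ρ a := by
            apply mul_le_mul_of_nonneg_right _ hnorm2nonneg
            apply mul_le_mul (le_max_right _ _) (hpow β₂ (le_max_right _ _)) (by positivity)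
              hCpos.le
    calc ‖a‖ = max ‖a.1‖ ‖a.2‖ := Prod.norm_def a
      _ ≤ C * ((n : ℝ) + 1) ^ β * norm2 ρ a := max_le hbd₁ hbd₂
  have h2β : (1 : ℝ) ≤ (2 : ℝ) ^ β := Real.one_le_rpow one_le_two hβpos.le
  refine ⟨C * (2 : ℝ) ^ β, by positivity, β, hβpos, ?_⟩
  intro n a ha
  simp only [hWdef] at ha
  by_cases hn : n = 0
  · subst hn
    simp only [if_pos rfl] at ha
    have ha' : a ∈ (V₁ 1).prod (V₂ 1) := hW0le 1 ha
    calc ‖a‖ ≤ C * ((1 : ℕ) + 1 : ℝ) ^ β * norm2 ρ a := key 1 a ha'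
      _ = C * (2 : ℝ) ^ β * ((0 : ℕ) + 1 : ℝ) ^ β * norm2 ρ a := by
          norm_num [Real.one_rpow]
      _ ≤ C * (2 : ℝ) ^ β * ((0 : ℕ) + 1 : ℝ) ^ β * norm2 ρ a := le_refl _
  · simp only [if_neg hn] at ha
    calc ‖a‖ ≤ C * ((n : ℝ) + 1) ^ β * norm2 ρ a := key n a ha
      _ ≤ C * (2 : ℝ) ^ β * ((n : ℝ) + 1) ^ β * norm2 ρ a := by
          apply mul_le_mul_of_nonneg_right _ (Real.sqrt_nonneg _)
          apply mul_le_mul_of_nonneg_right _ (by positivity)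
          nlinarith
end

section
/- Let (A, ρ) be a unital C*-probability space with a filtration (V_n)_{n≥0} having the rapid decay property with constants c, α > 0, and let p ∈ ⋃_n V_n be a projection (p = p* = p²) with ρ(p) > 0. Then: (i) for every a ∈ A, the element p·a·p lies in the C*-norm closure of ⋃_n { x ∈ V_n : p·x·p = x }; and (ii) for every n and every b ∈ V_n with p·b·p = b one has ‖b‖ ≤ c·ρ(p)^{1/2}·(n+1)^α·(ρ(b* b)/ρ(p))^{1/2}. Consequently the corner pAp, equipped with the state ρ(p)^{-1}ρ, has the rapid decay property relative to the filtration (pAp ∩ V_n)_{n≥0}. -/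
open scoped ComplexOrder

section Defs

variable {A : Type*} [NormedRing A] [StarRing A] [Module ℂ A]

/-- A filtration of a unital complex `*`-algebra: an increasing sequence of subspaces with
`V 0 = ℂ·1`, stable under adjoints, submultiplicative, and with dense union. -/
structure IsAlgFiltration (V : ℕ → Submodule ℂ A) : Prop where
  zero_eq : V 0 = Submodule.span ℂ ({1} : Set A)
  mono : Monotone V
  star_mem : ∀ n : ℕ, ∀ a ∈ V n, star a ∈ V n
  mul_mem : ∀ m n : ℕ, ∀ a ∈ V m, ∀ b ∈ V n, a * b ∈ V (m + n)
  dense : Dense (⋃ n : ℕ, (V n : Set A))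

end Defs

/-- Corners preserve rapid decay: if `(V n)` has rapid decay with constants
`c, α` and `p ∈ ⋃ n, V n` is a projection with `ρ(p) > 0`, then (i) every `p·a·p` is in the
closure of `⋃ n {x ∈ V n | p·x·p = x}`; (ii) for `b ∈ V n` with `p·b·p = b` one has
`‖b‖ ≤ c ρ(p)^{1/2} (n+1)^α (ρ(b* b)/ρ(p))^{1/2}`; consequently the corner `pAp` with the
state `ρ(p)⁻¹ρ` has rapid decay relative to the filtration `(pAp ∩ V n)`. -/
theorem rapidDecay_corner
    {A : Type*} [NormedRing A] [StarRing A] [CStarRing A] [CompleteSpace A]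
    [NormedAlgebra ℂ A] [StarModule ℂ A]
    (ρ : A →ₗ[ℂ] ℂ) (hρ : IsState ρ)
    (V : ℕ → Submodule ℂ A) (hV : IsAlgFiltration V)
    (c α : ℝ) (hc : 0 < c) (hα : 0 < α) (hRD : HasRapidDecayWith ρ V c α)
    (p : A) (hp : ∃ n : ℕ, p ∈ V n) (hidem : p * p = p) (hsa : star p = p)
    (hpos : 0 < (ρ p).re) :
    (∀ a : A, p * a * p ∈ closure (⋃ n : ℕ, {x : A | x ∈ V n ∧ p * x * p = x})) ∧
    (∀ n : ℕ, ∀ b ∈ V n, p * b * p = b →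
      ‖b‖ ≤ c * Real.sqrt (ρ p).re * ((n : ℝ) + 1) ^ α *
        Real.sqrt ((ρ (star b * b)).re / (ρ p).re)) ∧
    (∃ c' > (0 : ℝ), ∃ α' > (0 : ℝ), ∀ n : ℕ, ∀ b ∈ V n, p * b * p = b →
      ‖b‖ ≤ c' * ((n : ℝ) + 1) ^ α' *
        Real.sqrt ((ρ (star b * b)).re / (ρ p).re)) := by

  have hsqrt : 0 < Real.sqrt (ρ p).re := Real.sqrt_pos.mpr hpos
  have key : ∀ x : A, p * (p * x * p) * p = p * x * p := by
    intro x
    simp only [mul_assoc]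
    rw [hidem, ← mul_assoc p p, hidem]
  have part2 : ∀ n : ℕ, ∀ b ∈ V n, p * b * p = b →
      ‖b‖ ≤ c * Real.sqrt (ρ p).re * ((n : ℝ) + 1) ^ α *
        Real.sqrt ((ρ (star b * b)).re / (ρ p).re) := by
    intro n b hb _
    have h2 := hRD n b hb
    have hx : 0 ≤ (ρ (star b * b)).re := by
      have := hρ.nonneg b
      simpa using (Complex.le_def.mp this).1
    have heq : c * Real.sqrt (ρ p).re * ((n : ℝ) + 1) ^ α *
        Real.sqrt ((ρ (star b * b)).re / (ρ p).re)
        = c * ((n : ℝ) + 1) ^ α * Real.sqrt (ρ (star b * b)).re := by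
      rw [Real.sqrt_div hx]
      field_simp
    rw [heq]
    exact h2
  refine ⟨?_, part2, c * Real.sqrt (ρ p).re, by positivity, α, hα, part2⟩
  intro a
  have hcont : Continuous (fun x : A => p * x * p) :=
    (continuous_const.mul continuous_id).mul continuous_const
  have hmem : a ∈ closure (⋃ n : ℕ, (V n : Set A)) := hV.dense a
  have hmaps : Set.MapsTo (fun x : A => p * x * p) (⋃ n : ℕ, (V n : Set A))
      (⋃ n : ℕ, {x : A | x ∈ V n ∧ p * x * p = x}) := by
    rintro x hx
    obtain ⟨s, ⟨n, rfl⟩, hxn⟩ := hx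
    obtain ⟨m, hm⟩ := hp
    refine Set.mem_iUnion.mpr ⟨m + n + m, ?_, key x⟩
    exact hV.mul_mem (m + n) m (p * x) (hV.mul_mem m n p hm x hxn) p hm
  have := map_mem_closure (f := fun x : A => p * x * p) hcont hmem hmaps
  simpa using this
end

section
/- Let A be a unital C*-algebra and τ a tracial state on A (a ℂ-linear functional with τ(1) = 1, τ(a* a) ≥ 0, and τ(a b) = τ(b a) for all a, b ∈ A). Let x₁, …, x_k ∈ A satisfy τ(x_j* x_i) = δ_{ij} (Kronecker delta) for all i, j. Then: (i) for all complex scalars α₁, …, α_k one has ‖Σ_{i=1}^k α_i x_i‖ ≤ (Σ_{i=1}^k |α_i|²)^{1/2} · ‖Σ_{i=1}^k x_i x_i*‖^{1/2}; and (ii) k ≤ ‖Σ_{i=1}^k x_i x_i*‖. -/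
open scoped ComplexOrder

section Defs

variable {A : Type*} [NormedRing A] [StarRing A] [Module ℂ A]

/-- A filtration of a unital complex `*`-algebra: an increasing sequence of subspaces with
`V 0 = ℂ·1`, stable under adjoints, submultiplicative, and with dense union. -/
structure IsFiltration' (V : ℕ → Submodule ℂ A) : Prop where
  zero_eq : V 0 = Submodule.span ℂ ({1} : Set A)
  mono : Monotone V
  star_mem : ∀ n : ℕ, ∀ a ∈ V n, star a ∈ V n
  mul_mem : ∀ m n : ℕ, ∀ a ∈ V m, ∀ b ∈ V n, a * b ∈ V (m + n)
  dense : Dense (⋃ n : ℕ, (V n : Set A))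

end Defs

/-- If `τ` is a tracial state on a unital C*-algebra `A` and `x₁, …, x_k ∈ A`
satisfy `τ(x_j* x_i) = δ_{ij}`, then (i) `‖Σ α_i x_i‖ ≤ (Σ |α_i|²)^{1/2} ‖Σ x_i x_i*‖^{1/2}`
for all scalars `α_i`, and (ii) `k ≤ ‖Σ x_i x_i*‖`. -/
theorem orthonormal_tuple_norm_bound
    {A : Type*} [NormedRing A] [StarRing A] [CStarRing A] [CompleteSpace A]
    [NormedAlgebra ℂ A] [StarModule ℂ A]
    (τ : A →ₗ[ℂ] ℂ) (hτ : IsState τ) (htr : ∀ a b : A, τ (a * b) = τ (b * a))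
    (k : ℕ) (x : Fin k → A)
    (hON : ∀ i j : Fin k, τ (star (x j) * x i) = if i = j then 1 else 0) :
    (∀ α : Fin k → ℂ,
      ‖∑ i, α i • x i‖ ≤
        Real.sqrt (∑ i, ‖α i‖ ^ 2) * Real.sqrt ‖∑ i, x i * star (x i)‖) ∧
    (k : ℝ) ≤ ‖∑ i, x i * star (x i)‖ := by
  letI : CStarAlgebra A := {}
  letI : PartialOrder A := CStarAlgebra.spectralOrder A
  letI : StarOrderedRing A := CStarAlgebra.spectralOrderedRing A
  set S : A := ∑ i, x i * star (x i) with hSdef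
  have hSnn : 0 ≤ S := Finset.sum_nonneg fun i _ => mul_star_self_nonneg (x i)
  constructor
  · intro α
    set y : A := ∑ i, α i • x i with hydef
    set c : ℝ := ∑ i, ‖α i‖ ^ 2 with hcdef
    have hc0 : 0 ≤ c := Finset.sum_nonneg fun i _ => sq_nonneg _
    set z : Fin k → Fin k → A := fun i j =>
      (starRingEnd ℂ) (α j) • x i - (starRingEnd ℂ) (α i) • x j with hzdef
    have hz : ∀ i j, z i j * star (z i j) =
        ((starRingEnd ℂ) (α j) * α j) • (x i * star (x i))
        + ((starRingEnd ℂ) (α i) * α i) • (x j * star (x j))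
        - (α i * (starRingEnd ℂ) (α j)) • (x i * star (x j))
        - (α j * (starRingEnd ℂ) (α i)) • (x j * star (x i)) := by
      intro i j
      simp only [hzdef, star_sub, star_smul, starRingEnd_apply, star_star,
        sub_mul, mul_sub, smul_mul_assoc, mul_smul_comm, smul_smul]
      module
    have hyy : y * star y = ∑ i, ∑ j, (α i * (starRingEnd ℂ) (α j)) • (x i * star (x j)) := by
      rw [hydef, star_sum, Finset.sum_mul_sum]
      simp only [star_smul, smul_mul_assoc, mul_smul_comm, smul_smul]
      exact Finset.sum_congr rfl fun i _ => Finset.sum_congr rfl fun j _ => by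
        rw [starRingEnd_apply, mul_comm]
    have hcC : ∑ j : Fin k, (starRingEnd ℂ) (α j) * α j = (c : ℂ) := by
      push_cast [hcdef]
      exact Finset.sum_congr rfl fun j _ => Complex.conj_mul' (α j)
    have e1 : ∑ i : Fin k, ∑ j, ((starRingEnd ℂ) (α j) * α j) • (x i * star (x i))
        = (c : ℂ) • S := by
      rw [hSdef, Finset.smul_sum]
      refine Finset.sum_congr rfl fun i _ => ?_
      rw [← Finset.sum_smul, hcC]
    have e2 : ∑ i : Fin k, ∑ j, ((starRingEnd ℂ) (α i) * α i) • (x j * star (x j))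
        = (c : ℂ) • S := by
      rw [Finset.sum_comm]; exact e1
    have e3 : ∑ i : Fin k, ∑ j, (α j * (starRingEnd ℂ) (α i)) • (x j * star (x i))
        = y * star y := by
      rw [Finset.sum_comm, hyy]
    have key : ∑ i, ∑ j, z i j * star (z i j)
        = (2 : ℂ) • ((c : ℂ) • S - y * star y) := by
      calc ∑ i, ∑ j, z i j * star (z i j)
          = ((c : ℂ) • S + (c : ℂ) • S) - y * star y - y * star y := by
            simp only [hz, Finset.sum_sub_distrib, Finset.sum_add_distrib, e1, e2, e3, ← hyy]
        _ = (2 : ℂ) • ((c : ℂ) • S - y * star y) := by module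
    set rC : ℂ := (((Real.sqrt 2)⁻¹ : ℝ) : ℂ) with hrC
    have hr2 : rC * rC = (2 : ℂ)⁻¹ := by
      rw [hrC, ← Complex.ofReal_mul, ← mul_inv, Real.mul_self_sqrt (by norm_num),
        Complex.ofReal_inv, Complex.ofReal_ofNat]
    have hstar : star rC = rC := by
      rw [hrC, Complex.star_def, Complex.conj_ofReal]
    have key' : (c : ℂ) • S - y * star y
        = ∑ i, ∑ j, (rC • z i j) * star (rC • z i j) := by
      have : ∀ i j : Fin k, (rC • z i j) * star (rC • z i j)
          = (2 : ℂ)⁻¹ • (z i j * star (z i j)) := by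
        intro i j
        rw [star_smul, smul_mul_assoc, mul_smul_comm, smul_smul, hstar, hr2]
      simp only [this, ← Finset.smul_sum, key, smul_smul]
      norm_num
    have hpos : 0 ≤ (c : ℂ) • S - y * star y := by
      rw [key']
      exact Finset.sum_nonneg fun i _ => Finset.sum_nonneg fun j _ => mul_star_self_nonneg _
    have hle : y * star y ≤ (c : ℂ) • S := sub_nonneg.mp hpos
    have hnorm : ‖y‖ * ‖y‖ ≤ c * ‖S‖ := by
      calc ‖y‖ * ‖y‖ = ‖y * star y‖ := (CStarRing.norm_self_mul_star).symm
        _ ≤ ‖(c : ℂ) • S‖ :=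
            CStarAlgebra.norm_le_norm_of_nonneg_of_le (mul_star_self_nonneg y) hle
        _ = c * ‖S‖ := by
            rw [norm_smul, Complex.norm_real, Real.norm_of_nonneg hc0]
    calc ‖y‖ = Real.sqrt (‖y‖ * ‖y‖) := (Real.sqrt_mul_self (norm_nonneg y)).symm
      _ ≤ Real.sqrt (c * ‖S‖) := Real.sqrt_le_sqrt hnorm
      _ = Real.sqrt c * Real.sqrt ‖S‖ := Real.sqrt_mul hc0 _
  · have hτS : τ S = (k : ℂ) := by
      rw [hSdef, map_sum]
      have h1 : ∀ i : Fin k, τ (x i * star (x i)) = 1 := fun i => by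
        rw [htr]; simpa using hON i i
      simp [h1]
    have hSsa : IsSelfAdjoint S := .of_nonneg hSnn
    set w : A := algebraMap ℝ A ‖S‖ - S with hwdef
    have hw : 0 ≤ w := sub_nonneg.mpr hSsa.le_algebraMap_norm_self
    have hb : star (CFC.sqrt w) * CFC.sqrt w = w := by
      rw [(IsSelfAdjoint.of_nonneg (CFC.sqrt_nonneg (a := w))).star_eq,
        CFC.sqrt_mul_sqrt_self w hw]
    have hτw : (0 : ℂ) ≤ τ w := by
      have := hτ.nonneg (CFC.sqrt w)
      rwa [hb] at this
    have hone : τ (algebraMap ℝ A ‖S‖) = (‖S‖ : ℂ) := by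
      rw [Algebra.algebraMap_eq_smul_one, ← Complex.coe_smul, map_smul, hτ.map_one, smul_eq_mul,
        mul_one]
    rw [hwdef, map_sub, hone, hτS] at hτw
    have : ((‖S‖ - (k : ℝ) : ℝ) : ℂ) = (‖S‖ : ℂ) - (k : ℂ) := by push_cast; ring
    rw [← this] at hτw
    have := Complex.zero_le_real.mp hτw
    linarith
end

section
/- Let (A, τ) be a unital C*-probability space with τ a faithful tracial state, and let (V_n)_{n≥0} be a filtration of A with dim V_n < ∞ for every n. Then the following are equivalent: (a) there exist constants c, γ > 0 such that for every n there is a basis x₁, …, x_{k_n} of V_n which is orthonormal with respect to the inner product ⟨a, b⟩ = τ(b* a) and which satisfies ‖Σ_{i=1}^{k_n} x_i x_i*‖ ≤ c (n+1)^γ; (b) n ↦ dim V_n grows at most polynomially and (V_n) has the rapid decay property. -/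
open scoped ComplexOrder

section Defs

variable {A : Type*} [NormedRing A] [StarRing A] [Module ℂ A]

/-- A filtration of a unital complex `*`-algebra: an increasing sequence of subspaces with
`V 0 = ℂ·1`, stable under adjoints, submultiplicative, and with dense union. -/
structure IsFiltrationOfSubspaces (V : ℕ → Submodule ℂ A) : Prop where
  zero_eq : V 0 = Submodule.span ℂ ({1} : Set A)
  mono : Monotone V
  star_mem : ∀ n : ℕ, ∀ a ∈ V n, star a ∈ V n
  mul_mem : ∀ m n : ℕ, ∀ a ∈ V m, ∀ b ∈ V n, a * b ∈ V (m + n)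
  dense : Dense (⋃ n : ℕ, (V n : Set A))

end Defs

section Aux

variable {A : Type*} [CStarAlgebra A] [PartialOrder A] [StarOrderedRing A]

lemma state_nonneg (τ : A →ₗ[ℂ] ℂ) (hτ : IsState τ) {u : A} (hu : 0 ≤ u) :
    0 ≤ τ u := by
  rw [StarOrderedRing.nonneg_iff] at hu
  induction hu using AddSubmonoid.closure_induction with
  | mem x hx => obtain ⟨s, rfl⟩ := hx; exact hτ.nonneg s
  | zero => simp
  | add x y _ _ hx hy => rw [map_add]; exact add_nonneg hx hy

lemma state_algebraMap (τ : A →ₗ[ℂ] ℂ) (hτ : IsState τ) (r : ℝ) :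
    τ (algebraMap ℝ A r) = (r : ℂ) := by
  rw [IsScalarTower.algebraMap_apply ℝ ℂ A, Algebra.algebraMap_eq_smul_one, map_smul,
    hτ.map_one, smul_eq_mul, mul_one]
  rfl

lemma state_im_zero (τ : A →ₗ[ℂ] ℂ) (hτ : IsState τ) {h : A} (hh : IsSelfAdjoint h) :
    (τ h).im = 0 := by
  have h1 : 0 ≤ h + algebraMap ℝ A ‖h‖ := by
    simpa [sub_neg_eq_add] using sub_nonneg.mpr hh.neg_algebraMap_norm_le_self
  have h2 := state_nonneg τ hτ h1
  rw [map_add, state_algebraMap τ hτ] at h2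
  have := (Complex.le_def.mp h2).2
  simpa using this.symm

lemma state_re_le_norm (τ : A →ₗ[ℂ] ℂ) (hτ : IsState τ) {h : A} (hh : IsSelfAdjoint h) :
    (τ h).re ≤ ‖h‖ := by
  have h1 : 0 ≤ algebraMap ℝ A ‖h‖ - h :=
    sub_nonneg.mpr hh.le_algebraMap_norm_self
  have h2 := state_nonneg τ hτ h1
  rw [map_sub, state_algebraMap τ hτ] at h2
  have := (Complex.le_def.mp h2).1
  simpa using this

lemma state_star (τ : A →ₗ[ℂ] ℂ) (hτ : IsState τ) (a : A) :
    τ (star a) = (starRingEnd ℂ) (τ a) := by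
  have hh : IsSelfAdjoint (a + star a) := by
    simp [IsSelfAdjoint, star_add, add_comm]
  have hk : IsSelfAdjoint (Complex.I • (a - star a)) := by
    simp only [IsSelfAdjoint, star_smul, star_sub, star_star, Complex.star_def,
      Complex.conj_I, neg_smul, smul_sub, neg_sub]
    abel
  have im1 := state_im_zero τ hτ hh
  have im2 := state_im_zero τ hτ hk
  rw [map_add] at im1
  rw [map_smul, map_sub, smul_eq_mul] at im2
  simp only [Complex.add_im] at im1
  simp only [Complex.mul_im, Complex.I_re, Complex.I_im, Complex.sub_re, Complex.sub_im,
    zero_mul, one_mul, zero_add] at im2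
  apply Complex.ext <;> simp [Complex.conj_re, Complex.conj_im] <;> linarith

lemma exists_orthonormal (E : Type*) [AddCommGroup E] [Module ℂ E] [FiniteDimensional ℂ E]
    (c : InnerProductSpace.Core ℂ E) :
    ∃ v : Fin (Module.finrank ℂ E) → E, Submodule.span ℂ (Set.range v) = ⊤ ∧
      ∀ i j, c.inner (v j) (v i) = if i = j then 1 else 0 := by
  letI := c.toNormedAddCommGroup
  letI := InnerProductSpace.ofCore c.toCore
  let b := stdOrthonormalBasis ℂ E
  refine ⟨b, ?_, fun i j => ?_⟩
  · simpa using b.toBasis.span_eq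
  · have := orthonormal_iff_ite.mp b.orthonormal j i
    simpa [eq_comm] using this

end Aux

/-- For a faithful tracial unital C*-probability space `(A, τ)` and a
filtration `(V n)` with each `V n` finite dimensional, the following are equivalent:
(a) there are `c, γ > 0` such that each `V n` admits a `τ`-orthonormal basis `x₁, …, x_{k_n}`
with `‖Σ x_i x_i*‖ ≤ c (n+1)^γ`; (b) `n ↦ dim V n` grows at most polynomially and `(V n)`
has the rapid decay property. -/
theorem tracial_polynomial_growth_iff
    {A : Type*} [NormedRing A] [StarRing A] [CStarRing A] [CompleteSpace A]
    [NormedAlgebra ℂ A] [StarModule ℂ A]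
    (τ : A →ₗ[ℂ] ℂ) (hτ : IsState τ) (htr : ∀ a b : A, τ (a * b) = τ (b * a))
    (hfaith : ∀ a : A, τ (star a * a) = 0 → a = 0)
    (V : ℕ → Submodule ℂ A) (hV : IsFiltrationOfSubspaces V)
    (hfd : ∀ n : ℕ, FiniteDimensional ℂ (V n)) :
    (∃ c > (0 : ℝ), ∃ γ > (0 : ℝ), ∀ n : ℕ,
      ∃ x : Fin (Module.finrank ℂ (V n)) → A,
        (∀ i, x i ∈ V n) ∧
        Submodule.span ℂ (Set.range x) = V n ∧
        (∀ i j, τ (star (x j) * x i) = if i = j then 1 else 0) ∧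
        ‖∑ i, x i * star (x i)‖ ≤ c * ((n : ℝ) + 1) ^ γ) ↔
    ((∃ c > (0 : ℝ), ∃ γ > (0 : ℝ), ∀ n : ℕ,
        (Module.finrank ℂ (V n) : ℝ) ≤ c * ((n : ℝ) + 1) ^ γ) ∧
      HasRapidDecay τ V) := by
  letI : CStarAlgebra A :=
    { ‹NormedRing A›, ‹StarRing A›, ‹CStarRing A›, ‹CompleteSpace A›,
      ‹NormedAlgebra ℂ A›, ‹StarModule ℂ A› with }
  letI : PartialOrder A := CStarAlgebra.spectralOrder A
  letI : StarOrderedRing A := CStarAlgebra.spectralOrderedRing A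
  constructor
  · rintro ⟨c, hc, γ, hγ, h⟩
    have dim : ∀ n : ℕ, (Module.finrank ℂ (V n) : ℝ) ≤ c * ((n : ℝ) + 1) ^ γ := by
      intro n
      obtain ⟨x, hxV, hspan, horth, hnorm⟩ := h n
      have hSsa : IsSelfAdjoint (∑ i, x i * star (x i)) := by
        rw [IsSelfAdjoint, star_sum]
        exact Finset.sum_congr rfl fun i _ => by rw [star_mul, star_star]
      have hτS : τ (∑ i, x i * star (x i)) = (Module.finrank ℂ (V n) : ℂ) := by
        rw [map_sum]
        rw [Finset.sum_congr rfl fun i _ => show τ (x i * star (x i)) = 1 by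
          rw [htr]; simpa using horth i i]
        simp
      have hre : ((Module.finrank ℂ (V n) : ℝ)) = (τ (∑ i, x i * star (x i))).re := by
        rw [hτS]; simp
      rw [hre]
      exact le_trans (state_re_le_norm τ hτ hSsa) hnorm
    refine ⟨⟨c, hc, γ, hγ, dim⟩, c, hc, γ, hγ, ?_⟩
    intro n a ha
    obtain ⟨x, hxV, hspan, horth, hnorm⟩ := h n
    rw [← hspan, Submodule.mem_span_range_iff_exists_fun] at ha
    obtain ⟨co, hco⟩ := ha
    have hcγ : (0:ℝ) ≤ c * ((n : ℝ) + 1) ^ γ :=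
      le_trans (norm_nonneg _) hnorm
    have hx_norm : ∀ i, ‖x i‖ ≤ Real.sqrt ‖∑ i, x i * star (x i)‖ := by
      intro i
      have h1 : x i * star (x i) ≤ ∑ i, x i * star (x i) :=
        Finset.single_le_sum (fun j _ => mul_star_self_nonneg (x j)) (Finset.mem_univ i)
      have h2 : ‖x i * star (x i)‖ ≤ ‖∑ i, x i * star (x i)‖ :=
        CStarAlgebra.norm_le_norm_of_nonneg_of_le (mul_star_self_nonneg _) h1
      rw [CStarRing.norm_self_mul_star] at h2
      have := Real.sqrt_le_sqrt h2
      rwa [Real.sqrt_mul_self (norm_nonneg _)] at this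
    have hτaa : τ (star a * a) = ∑ i, (starRingEnd ℂ) (co i) * co i := by
      rw [← hco, star_sum]
      simp only [star_smul, Complex.star_def]
      rw [Finset.sum_mul_sum, map_sum]
      have hj : ∀ j, τ (∑ i, (starRingEnd ℂ) (co j) • star (x j) * (co i • x i))
           = ∑ i, ((starRingEnd ℂ) (co j) * co i) * τ (star (x j) * x i) := by
        intro j
        rw [map_sum]
        refine Finset.sum_congr rfl fun i _ => ?_
        rw [smul_mul_smul_comm, map_smul, smul_eq_mul]
      rw [Finset.sum_congr rfl fun j _ => hj j]
      simp [horth, mul_ite, mul_one, mul_zero, Finset.sum_ite_eq']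
    have hre2 : (τ (star a * a)).re = ∑ i, ‖co i‖^2 := by
      rw [hτaa, Complex.re_sum]
      refine Finset.sum_congr rfl fun i _ => ?_
      simp only [Complex.mul_re, Complex.conj_re, Complex.conj_im,
        Complex.sq_norm, Complex.normSq_apply]
      ring
    have hn2 : norm2 τ a = Real.sqrt (∑ i, ‖co i‖^2) := by rw [norm2, hre2]
    have h1 : ‖a‖ ≤ (∑ i, ‖co i‖) * Real.sqrt ‖∑ i, x i * star (x i)‖ := by
      calc ‖a‖ = ‖∑ i, co i • x i‖ := by rw [hco]
        _ ≤ ∑ i, ‖co i • x i‖ := norm_sum_le _ _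
        _ = ∑ i, ‖co i‖ * ‖x i‖ := by simp [norm_smul]
        _ ≤ ∑ i, ‖co i‖ * Real.sqrt ‖∑ i, x i * star (x i)‖ :=
            Finset.sum_le_sum fun i _ => mul_le_mul_of_nonneg_left (hx_norm i) (norm_nonneg _)
        _ = (∑ i, ‖co i‖) * Real.sqrt ‖∑ i, x i * star (x i)‖ := by rw [Finset.sum_mul]
    have h2 : (∑ i, ‖co i‖) ≤
        Real.sqrt (Module.finrank ℂ (V n)) * Real.sqrt (∑ i, ‖co i‖^2) := by
      have hcs := sq_sum_le_card_mul_sum_sq (s := (Finset.univ : Finset (Fin (Module.finrank ℂ (V n)))))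
        (f := fun i => ‖co i‖)
      have h0 : (∑ i, ‖co i‖) = Real.sqrt ((∑ i, ‖co i‖)^2) :=
        (Real.sqrt_sq (Finset.sum_nonneg fun i _ => norm_nonneg _)).symm
      rw [h0, ← Real.sqrt_mul (by positivity)]
      apply Real.sqrt_le_sqrt
      simpa using hcs
    have h3 : Real.sqrt ‖∑ i, x i * star (x i)‖ ≤ Real.sqrt (c * ((n:ℝ)+1)^γ) :=
      Real.sqrt_le_sqrt hnorm
    have h4 : Real.sqrt (Module.finrank ℂ (V n)) ≤ Real.sqrt (c * ((n:ℝ)+1)^γ) :=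
      Real.sqrt_le_sqrt (dim n)
    calc ‖a‖ ≤ (∑ i, ‖co i‖) * Real.sqrt ‖∑ i, x i * star (x i)‖ := h1
      _ ≤ (Real.sqrt (Module.finrank ℂ (V n)) * Real.sqrt (∑ i, ‖co i‖^2)) *
            Real.sqrt ‖∑ i, x i * star (x i)‖ :=
          mul_le_mul_of_nonneg_right h2 (Real.sqrt_nonneg _)
      _ = (Real.sqrt (Module.finrank ℂ (V n)) * Real.sqrt ‖∑ i, x i * star (x i)‖) *
            Real.sqrt (∑ i, ‖co i‖^2) := by ring
      _ ≤ (Real.sqrt (c * ((n:ℝ)+1)^γ) * Real.sqrt (c * ((n:ℝ)+1)^γ)) *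
            Real.sqrt (∑ i, ‖co i‖^2) := by
          apply mul_le_mul_of_nonneg_right _ (Real.sqrt_nonneg _)
          exact mul_le_mul h4 h3 (Real.sqrt_nonneg _) (Real.sqrt_nonneg _)
      _ = c * ((n:ℝ)+1)^γ * norm2 τ a := by
          rw [Real.mul_self_sqrt hcγ, hn2]
  · rintro ⟨⟨c₁, hc₁, γ₁, hγ₁, hdim⟩, c₂, hc₂, α, hα, hRD⟩
    refine ⟨c₁ * c₂^2, by positivity, γ₁ + 2*α, by positivity, fun n => ?_⟩
    haveI := hfd n
    let cc : InnerProductSpace.Core ℂ (V n) :=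
    { inner := fun u v => τ (star (u : A) * (v : A))
      conj_inner_symm := fun u v => by
        show (starRingEnd ℂ) (τ (star (v : A) * (u : A))) = τ (star (u : A) * (v : A))
        rw [← state_star τ hτ, star_mul, star_star]
      re_inner_nonneg := fun u => by
        have := hτ.nonneg (u : A)
        simpa using (Complex.le_def.mp this).1
      add_left := fun u v w => by
        simp [star_add, add_mul, map_add]
      smul_left := fun u v r => by
        simp [star_smul, smul_mul_assoc, map_smul, smul_eq_mul, Complex.star_def]
      definite := fun u hu => by
        exact Subtype.ext (hfaith _ hu) }
    obtain ⟨v, hvspan, hvorth⟩ := exists_orthonormal (V n) cc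
    refine ⟨fun i => ((v i : V n) : A), fun i => (v i).2, ?_, fun i j => hvorth i j, ?_⟩
    · have hrange : Set.range (fun i => ((v i : V n) : A)) = (V n).subtype '' Set.range v := by
        rw [← Set.range_comp]; rfl
      rw [hrange, Submodule.span_image, hvspan, Submodule.map_subtype_top]
    · have hone : ∀ i, norm2 τ ((v i : V n) : A) = 1 := by
        intro i
        have hi := hvorth i i
        simp only [if_pos rfl] at hi
        rw [norm2, show τ (star ((v i : V n) : A) * ((v i : V n) : A)) = 1 from hi]
        simp
      have hxb : ∀ i, ‖((v i : V n) : A)‖ ≤ c₂ * ((n:ℝ)+1)^α := by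
        intro i
        have := hRD n (v i) (v i).2
        rwa [hone i, mul_one] at this
      have hpow : ((n:ℝ)+1)^(2*α) = (((n:ℝ)+1)^α)^2 := by
        rw [mul_comm, Real.rpow_mul (by positivity), Real.rpow_two]
      calc ‖∑ i, ((v i : V n) : A) * star ((v i : V n) : A)‖
          ≤ ∑ i, ‖((v i : V n) : A) * star ((v i : V n) : A)‖ := norm_sum_le _ _
        _ ≤ ∑ i : Fin (Module.finrank ℂ (V n)), (c₂ * ((n:ℝ)+1)^α)^2 := by
            refine Finset.sum_le_sum fun i _ => ?_
            calc ‖((v i : V n) : A) * star ((v i : V n) : A)‖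
                ≤ ‖((v i : V n) : A)‖ * ‖star ((v i : V n) : A)‖ := norm_mul_le _ _
              _ = ‖((v i : V n) : A)‖^2 := by rw [norm_star, sq]
              _ ≤ (c₂ * ((n:ℝ)+1)^α)^2 := pow_le_pow_left₀ (norm_nonneg _) (hxb i) 2
        _ = (Module.finrank ℂ (V n) : ℝ) * (c₂ * ((n:ℝ)+1)^α)^2 := by
            rw [Finset.sum_const, Finset.card_univ, Fintype.card_fin, nsmul_eq_mul]
        _ ≤ (c₁ * ((n:ℝ)+1)^γ₁) * (c₂ * ((n:ℝ)+1)^α)^2 :=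
            mul_le_mul_of_nonneg_right (hdim n) (by positivity)
        _ = c₁ * c₂^2 * ((n:ℝ)+1)^(γ₁ + 2*α) := by
            rw [Real.rpow_add (by positivity), hpow]
            ring
end

section
/- Let A be a unital C*-algebra and ρ a state on A. For a tuple x = (x₁, …, x_r) ∈ A^r, let V_n(x) denote the ℂ-linear span of 1 together with all products of at most n factors, each factor being some x_i or some x_i*. Suppose there exist c, α > 0 with ‖a‖ ≤ c (n+1)^α ‖a‖₂ for every n and every a ∈ V_n(x). Let y = (y₁, …, y_s) ∈ A^s and d ≥ 1 be such that y_j ∈ V_d(x) for every j. Then ‖b‖ ≤ c d^α (n+1)^α ‖b‖₂ for every n and every b ∈ V_n(y). In particular, the rapid decay property of a finitely generated *-algebra with a state does not depend on the choice of finite generating tuple. -/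
open scoped ComplexOrder

section Words

variable {A : Type*} [NormedRing A] [StarRing A] [Module ℂ A]

/-- Products of at most `n` factors drawn from the set `S` (including the empty product `1`). -/
def wordsUpTo (S : Set A) : ℕ → Set A
  | 0 => {1}
  | n + 1 => wordsUpTo S n ∪ {a : A | ∃ w ∈ wordsUpTo S n, ∃ s ∈ S, a = w * s}

/-- `tupleFiltration x n` is the linear span of `1` together with all products of at most `n`
factors, each factor being some `x i` or some `star (x i)`. -/
noncomputable def tupleFiltration {r : ℕ} (x : Fin r → A) (n : ℕ) : Submodule ℂ A :=
  Submodule.span ℂ (wordsUpTo (Set.range x ∪ star '' Set.range x) n)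

end Words


section Aux

variable {A : Type*} [NormedRing A] [StarRing A] [NormedAlgebra ℂ A] [StarModule ℂ A]

lemma one_mem_wordsUpTo (S : Set A) : ∀ n, (1 : A) ∈ wordsUpTo S n
  | 0 => rfl
  | n + 1 => Or.inl (one_mem_wordsUpTo S n)

lemma wordsUpTo_mono {S : Set A} : ∀ {m n : ℕ}, m ≤ n → wordsUpTo S m ⊆ wordsUpTo S n := by
  intro m n h
  induction h with
  | refl => exact subset_rfl
  | step _ ih => exact ih.trans Set.subset_union_left

lemma mul_mem_wordsUpTo {S : Set A} {a b : A} :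
    ∀ {m n : ℕ}, a ∈ wordsUpTo S m → b ∈ wordsUpTo S n → a * b ∈ wordsUpTo S (m + n) := by
  intro m n ha hb
  induction n generalizing b with
  | zero =>
    rcases hb with rfl
    simpa using ha
  | succ n ih =>
    rcases hb with hb | ⟨w, hw, t, ht, rfl⟩
    · exact wordsUpTo_mono (Nat.le_succ _) (ih hb)
    · exact Or.inr ⟨a * w, ih hw, t, ht, (mul_assoc a w t).symm⟩

lemma star_mem_wordsUpTo {S : Set A} (hS : ∀ s ∈ S, star s ∈ S) {a : A} :
    ∀ {n : ℕ}, a ∈ wordsUpTo S n → star a ∈ wordsUpTo S n := by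
  intro n ha
  induction n generalizing a with
  | zero =>
    rcases ha with rfl
    simp [wordsUpTo]
  | succ n ih =>
    rcases ha with ha | ⟨w, hw, t, ht, rfl⟩
    · exact wordsUpTo_mono (Nat.le_succ _) (ih ha)
    · have h1 : star t ∈ wordsUpTo S 1 :=
        Or.inr ⟨1, rfl, star t, hS t ht, (one_mul _).symm⟩
      have := mul_mem_wordsUpTo (S := S) h1 (ih hw)
      rw [star_mul]
      simpa [Nat.add_comm] using this

lemma tupleFiltration_star_mem {r : ℕ} {x : Fin r → A} {n : ℕ} {a : A}
    (ha : a ∈ tupleFiltration x n) : star a ∈ tupleFiltration x n := by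
  have hS : ∀ s ∈ (Set.range x ∪ star '' Set.range x), star s ∈ (Set.range x ∪ star '' Set.range x) := by
    rintro s (hs | ⟨t, ht, rfl⟩)
    · exact Or.inr ⟨s, hs, rfl⟩
    · simpa using Or.inl ht
  induction ha using Submodule.span_induction with
  | mem w hw => exact Submodule.subset_span (star_mem_wordsUpTo hS hw)
  | zero => simpa using Submodule.zero_mem _
  | add u v _ _ hu hv => simpa [star_add] using Submodule.add_mem _ hu hv
  | smul c u _ hu =>
    rw [star_smul]
    exact Submodule.smul_mem _ _ hu

lemma tupleFiltration_mul_mem {r : ℕ} {x : Fin r → A} {m n : ℕ} {a b : A}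
    (ha : a ∈ tupleFiltration x m) (hb : b ∈ tupleFiltration x n) :
    a * b ∈ tupleFiltration x (m + n) := by
  have h : tupleFiltration x m * tupleFiltration x n ≤ tupleFiltration x (m + n) := by
    rw [tupleFiltration, tupleFiltration, Submodule.span_mul_span]
    apply Submodule.span_mono
    rintro z ⟨u, hu, v, hv, rfl⟩
    exact mul_mem_wordsUpTo hu hv
  exact h (Submodule.mul_mem_mul ha hb)

lemma tupleFiltration_mono {r : ℕ} {x : Fin r → A} {m n : ℕ} (h : m ≤ n) :
    tupleFiltration x m ≤ tupleFiltration x n :=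
  Submodule.span_mono (wordsUpTo_mono h)

lemma tupleFiltration_le {r s : ℕ} {x : Fin r → A} {y : Fin s → A} {d : ℕ}
    (hy : ∀ j : Fin s, y j ∈ tupleFiltration x d) (n : ℕ) :
    tupleFiltration y n ≤ tupleFiltration x (d * n) := by
  induction n with
  | zero =>
    rw [tupleFiltration, Submodule.span_le]
    rintro a rfl
    exact Submodule.subset_span (one_mem_wordsUpTo _ _)
  | succ n ih =>
    rw [tupleFiltration, Submodule.span_le]
    rintro a (ha | ⟨w, hw, t, ht, rfl⟩)
    · exact tupleFiltration_mono (by nlinarith) (ih (Submodule.subset_span ha))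
    · have hw' : w ∈ tupleFiltration x (d * n) := ih (Submodule.subset_span hw)
      have ht' : t ∈ tupleFiltration x d := by
        rcases ht with ⟨j, rfl⟩ | ⟨u, ⟨j, rfl⟩, rfl⟩
        · exact hy j
        · exact tupleFiltration_star_mem (hy j)
      have := tupleFiltration_mul_mem hw' ht'
      rwa [show d * n + d = d * (n + 1) by ring] at this

end Aux

/-- If the tuple `x` satisfies the rapid decay estimate
`‖a‖ ≤ c (n+1)^α ‖a‖₂` on `V_n(x)`, and each `y j` lies in `V_d(x)` with `d ≥ 1`, then
`‖b‖ ≤ c d^α (n+1)^α ‖b‖₂` for every `b ∈ V_n(y)`: rapid decay of a finitely generated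
`*`-algebra does not depend on the generating tuple. -/
theorem rapidDecay_change_of_generators
    {A : Type*} [NormedRing A] [StarRing A] [CStarRing A] [CompleteSpace A]
    [NormedAlgebra ℂ A] [StarModule ℂ A]
    (ρ : A →ₗ[ℂ] ℂ) (hρ : IsState ρ)
    {r s : ℕ} (x : Fin r → A) (y : Fin s → A)
    (c α : ℝ) (hc : 0 < c) (hα : 0 < α)
    (hx : ∀ n : ℕ, ∀ a ∈ tupleFiltration x n, ‖a‖ ≤ c * ((n : ℝ) + 1) ^ α * norm2 ρ a)
    (d : ℕ) (hd : 1 ≤ d) (hy : ∀ j : Fin s, y j ∈ tupleFiltration x d) :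
    ∀ n : ℕ, ∀ b ∈ tupleFiltration y n,
      ‖b‖ ≤ c * (d : ℝ) ^ α * ((n : ℝ) + 1) ^ α * norm2 ρ b := by
  intro n b hb
  have hb' : b ∈ tupleFiltration x (d * n) := tupleFiltration_le hy n hb
  have h1 : ‖b‖ ≤ c * ((d * n : ℕ) + 1 : ℝ) ^ α * norm2 ρ b := hx (d * n) b hb'
  have hn2 : (0:ℝ) ≤ norm2 ρ b := Real.sqrt_nonneg _
  have hdn : ((d * n : ℕ) + 1 : ℝ) ≤ (d : ℝ) * ((n : ℝ) + 1) := by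
    push_cast
    have : (1:ℝ) ≤ (d:ℝ) := by exact_mod_cast hd
    nlinarith
  have hpow : ((d * n : ℕ) + 1 : ℝ) ^ α ≤ ((d : ℝ) * ((n : ℝ) + 1)) ^ α :=
    Real.rpow_le_rpow (by positivity) hdn hα.le
  have hmul : ((d : ℝ) * ((n : ℝ) + 1)) ^ α = (d : ℝ) ^ α * ((n : ℝ) + 1) ^ α :=
    Real.mul_rpow (by positivity) (by positivity)
  calc ‖b‖ ≤ c * ((d * n : ℕ) + 1 : ℝ) ^ α * norm2 ρ b := h1
    _ ≤ c * ((d : ℝ) ^ α * ((n : ℝ) + 1) ^ α) * norm2 ρ b := by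
        apply mul_le_mul_of_nonneg_right _ hn2
        rw [← hmul]
        exact mul_le_mul_of_nonneg_left hpow hc.le
    _ = c * (d : ℝ) ^ α * ((n : ℝ) + 1) ^ α * norm2 ρ b := by ring
end

section
/- For every natural number n, every polynomial P ∈ ℂ[X] of degree at most n, and every real number t with −2 ≤ t ≤ 2, one has |P(t)| ≤ (n+1)^{3/2} · ( (1/(2π)) ∫_{−2}^{2} |P(s)|² √(4 − s²) ds )^{1/2}. That is, the filtration of (C([−2,2]), semicircular law) by polynomials of degree at most n has the rapid decay property, with constant c = 1 and exponent α = 3/2. -/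
open Polynomial Real Finset

noncomputable def scp : ℕ → Polynomial ℝ
  | 0 => 1
  | 1 => X
  | (k+2) => X * scp (k+1) - scp k

lemma scp_monic_deg (k : ℕ) : (scp k).Monic ∧ (scp k).natDegree = k := by
  induction k using Nat.strong_induction_on with
  | _ k ih =>
    match k with
    | 0 => exact ⟨monic_one, natDegree_one⟩
    | 1 => exact ⟨monic_X, natDegree_X⟩
    | (k+2) =>
      obtain ⟨h1, h2⟩ := ih (k+1) (by omega)
      obtain ⟨h3, h4⟩ := ih k (by omega)
      have hm : (X * scp (k+1)).Monic := monic_X.mul h1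
      have hd : (X * scp (k+1)).natDegree = k + 2 := by
        rw [natDegree_mul (X_ne_zero) h1.ne_zero, natDegree_X, h2]; omega
      constructor
      · show (X * scp (k+1) - scp k).Monic
        have : (scp k).degree < (X * scp (k+1)).degree := by
          rw [degree_mul, degree_X, Polynomial.degree_eq_natDegree h3.ne_zero, h4,
            Polynomial.degree_eq_natDegree h1.ne_zero, h2]
          exact_mod_cast by omega
        exact hm.sub_of_left this
      · show (X * scp (k+1) - scp k).natDegree = k + 2
        rw [← hd]
        apply natDegree_sub_eq_left_of_natDegree_lt
        omega

lemma scp_eval_cos (k : ℕ) (θ : ℝ) :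
    (scp k).eval (2 * Real.cos θ) * Real.sin θ = Real.sin ((k + 1) * θ) := by
  induction k using Nat.strong_induction_on with
  | _ k ih =>
    match k with
    | 0 => simp [scp]
    | 1 =>
      simp only [scp, eval_X, Nat.cast_one]
      rw [show ((1:ℝ)+1)*θ = 2*θ by ring, Real.sin_two_mul]; ring
    | (k+2) =>
      have h1 := ih (k+1) (by omega)
      have h2 := ih k (by omega)
      show (X * scp (k+1) - scp k).eval _ * _ = _
      simp only [eval_sub, eval_mul, eval_X, sub_mul]
      rw [mul_assoc, h1, h2]
      push_cast
      have e1 : ((k:ℝ) + 2 + 1) * θ = ((k+1)+1) * θ + θ := by ring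
      have e2 : ((k:ℝ) + 1) * θ = ((k+1)+1) * θ - θ := by ring
      rw [e1, e2, Real.sin_add, Real.sin_sub]
      ring

lemma abs_sin_nat_mul_le' (m : ℕ) (θ : ℝ) (hθ : 0 ≤ Real.sin θ) :
    |Real.sin (m * θ)| ≤ m * Real.sin θ := by
  induction m with
  | zero => simp
  | succ m ih =>
    have : ((m:ℝ) + 1) * θ = m * θ + θ := by ring
    push_cast
    rw [this, Real.sin_add]
    calc |Real.sin (m*θ) * Real.cos θ + Real.cos (m*θ) * Real.sin θ|
        ≤ |Real.sin (m*θ) * Real.cos θ| + |Real.cos (m*θ) * Real.sin θ| := abs_add_le _ _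
      _ ≤ m * Real.sin θ + 1 * Real.sin θ := by
          gcongr
          · rw [abs_mul]
            calc |Real.sin (m*θ)| * |Real.cos θ| ≤ |Real.sin (m*θ)| * 1 := by
                  gcongr; exact Real.abs_cos_le_one θ
              _ ≤ m * Real.sin θ := by rw [mul_one]; exact ih
          · rw [abs_mul, abs_of_nonneg hθ, one_mul]
            exact mul_le_of_le_one_left hθ (Real.abs_cos_le_one _)
      _ = ((m:ℝ) + 1) * Real.sin θ := by ring

lemma scp_abs_le (k : ℕ) (x : ℝ) (hx : x ∈ Set.Icc (-2:ℝ) 2) :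
    |(scp k).eval x| ≤ (k : ℝ) + 1 := by
  have hsub : Set.Ioo (-2:ℝ) 2 ⊆ {x | |(scp k).eval x| ≤ (k:ℝ) + 1} := by
    intro x hx
    obtain ⟨h1, h2⟩ := hx
    set θ := Real.arccos (x/2) with hθdef
    have hx1 : -1 ≤ x/2 := by linarith
    have hx2 : x/2 ≤ 1 := by linarith
    have hcos : Real.cos θ = x/2 := Real.cos_arccos hx1 hx2
    have hsin : Real.sin θ = Real.sqrt (1 - (x/2)^2) := Real.sin_arccos (x/2)
    have hsinpos : 0 < Real.sin θ := by
      rw [hsin]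
      apply Real.sqrt_pos.mpr
      nlinarith
    have hx' : x = 2 * Real.cos θ := by rw [hcos]; ring
    have key := scp_eval_cos k θ
    rw [← hx'] at key
    have : |(scp k).eval x| * Real.sin θ ≤ ((k:ℝ)+1) * Real.sin θ := by
      rw [← abs_of_nonneg hsinpos.le, ← abs_mul, key, abs_of_nonneg hsinpos.le]
      have := abs_sin_nat_mul_le' (k+1) θ hsinpos.le
      push_cast at this ⊢
      exact this
    exact le_of_mul_le_mul_right this hsinpos
  have hclosed : IsClosed {x : ℝ | |(scp k).eval x| ≤ (k:ℝ) + 1} :=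
    isClosed_le ((scp k).continuous_aeval.abs) continuous_const
  have : Set.Icc (-2:ℝ) 2 ⊆ {x | |(scp k).eval x| ≤ (k:ℝ) + 1} := by
    rw [← closure_Ioo (by norm_num : (-2:ℝ) ≠ 2)]
    exact hclosed.closure_subset_iff.mpr hsub
  exact this hx

lemma integral_cos_mul_eq_zero (m : ℝ) (hm : m ≠ 0) (hs : Real.sin (m * π) = 0) :
    ∫ θ in (0:ℝ)..π, Real.cos (m * θ) = 0 := by
  rw [intervalIntegral.integral_comp_mul_left Real.cos hm, integral_cos]
  simp [hs]

lemma integral_sin_sin (a b : ℕ) :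
    ∫ θ in (0:ℝ)..π, Real.sin (((a:ℝ)+1)*θ) * Real.sin (((b:ℝ)+1)*θ)
      = if a = b then π/2 else 0 := by
  have hpt : ∀ θ : ℝ, Real.sin (((a:ℝ)+1)*θ) * Real.sin (((b:ℝ)+1)*θ)
      = (Real.cos ((((a:ℝ)+1) - ((b:ℝ)+1))*θ) - Real.cos ((((a:ℝ)+1) + ((b:ℝ)+1))*θ)) / 2 := by
    intro θ
    have hx : (((a:ℝ)+1) - ((b:ℝ)+1))*θ = ((a:ℝ)+1)*θ - ((b:ℝ)+1)*θ := by ring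
    have hy : (((a:ℝ)+1) + ((b:ℝ)+1))*θ = ((a:ℝ)+1)*θ + ((b:ℝ)+1)*θ := by ring
    rw [hx, hy, Real.cos_sub, Real.cos_add]
    ring
  simp only [hpt]
  rw [intervalIntegral.integral_div]
  rw [intervalIntegral.integral_sub ((by fun_prop : Continuous fun θ:ℝ => Real.cos ((((a:ℝ)+1) - ((b:ℝ)+1))*θ)).intervalIntegrable _ _)
    ((by fun_prop : Continuous fun θ:ℝ => Real.cos ((((a:ℝ)+1) + ((b:ℝ)+1))*θ)).intervalIntegrable _ _)]
  have h2 : ∫ θ in (0:ℝ)..π, Real.cos ((((a:ℝ)+1) + ((b:ℝ)+1))*θ) = 0 := by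
    apply integral_cos_mul_eq_zero
    · positivity
    · have : (((a:ℝ)+1) + ((b:ℝ)+1)) * π = ((a + b + 2 : ℕ) : ℝ) * π := by push_cast; ring
      rw [this]
      exact Real.sin_nat_mul_pi _
  rw [h2]
  by_cases h : a = b
  · subst h
    rw [if_pos rfl]
    simp
  · rw [if_neg h]
    have h1 : ∫ θ in (0:ℝ)..π, Real.cos ((((a:ℝ)+1) - ((b:ℝ)+1))*θ) = 0 := by
      apply integral_cos_mul_eq_zero
      · intro hh
        apply h
        have : (a:ℝ) = b := by linarith
        exact_mod_cast this
      · have h0 := Real.sin_int_mul_pi ((a:ℤ) - (b:ℤ))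
        push_cast at h0
        rw [show (((a:ℝ)+1) - ((b:ℝ)+1)) * π = ((a:ℝ) - (b:ℝ)) * π by ring]
        exact h0
    rw [h1]; simp

lemma scp_ortho (j k : ℕ) :
    ∫ s in (-2:ℝ)..2, (scp j).eval s * (scp k).eval s * Real.sqrt (4 - s^2)
      = if j = k then 2*π else 0 := by
  set g : ℝ → ℝ := fun u => (scp j).eval u * (scp k).eval u * Real.sqrt (4 - u^2) with hg
  have hgc : Continuous g := by
    apply Continuous.mul
    · exact ((scp j).continuous_aeval).mul ((scp k).continuous_aeval)
    · exact Real.continuous_sqrt.comp (by fun_prop)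
  have hder : ∀ x ∈ Set.uIcc (0:ℝ) π, HasDerivAt (fun θ => 2 * Real.cos θ) (-(2 * Real.sin x)) x := by
    intro x _
    have := (Real.hasDerivAt_cos x).const_mul (2:ℝ)
    simpa [mul_comm, neg_mul, mul_neg] using this
  have hcv := intervalIntegral.integral_comp_smul_deriv hder
    (Continuous.continuousOn (by fun_prop)) hgc
  have hends : (2 : ℝ) * Real.cos 0 = 2 ∧ (2:ℝ) * Real.cos π = -2 := by
    constructor <;> simp
  rw [hends.1, hends.2] at hcv
  have key : ∫ s in (-2:ℝ)..2, g s = ∫ x in (0:ℝ)..π, 2 * Real.sin x * g (2 * Real.cos x) := by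
    rw [intervalIntegral.integral_symm 2 (-2), ← hcv, ← intervalIntegral.integral_neg]
    apply intervalIntegral.integral_congr
    intro x _
    show -(-(2 * Real.sin x) • (g ∘ fun θ => 2 * Real.cos θ) x) = 2 * Real.sin x * g (2 * Real.cos x)
    simp only [smul_eq_mul, Function.comp, neg_mul, neg_neg]
  rw [key]
  have hcong : Set.EqOn (fun x => 2 * Real.sin x * g (2 * Real.cos x))
      (fun x => 4 * (Real.sin (((j:ℝ)+1)*x) * Real.sin (((k:ℝ)+1)*x))) (Set.uIcc (0:ℝ) π) := by
    intro x hx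
    rw [Set.uIcc_of_le Real.pi_pos.le] at hx
    have hs : 0 ≤ Real.sin x := Real.sin_nonneg_of_nonneg_of_le_pi hx.1 hx.2
    have hsqrt : Real.sqrt (4 - (2 * Real.cos x)^2) = 2 * Real.sin x := by
      have : 4 - (2 * Real.cos x)^2 = (2 * Real.sin x)^2 := by
        have := Real.sin_sq_add_cos_sq x
        nlinarith
      rw [this, Real.sqrt_sq (by positivity)]
    simp only [hg]
    rw [hsqrt]
    have h1 := scp_eval_cos j x
    have h2 := scp_eval_cos k x
    push_cast at h1 h2
    calc 2 * Real.sin x * ((scp j).eval (2*Real.cos x) * (scp k).eval (2*Real.cos x) * (2 * Real.sin x))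
        = 4 * (((scp j).eval (2*Real.cos x) * Real.sin x) * ((scp k).eval (2*Real.cos x) * Real.sin x)) := by ring
      _ = 4 * (Real.sin (((j:ℝ)+1)*x) * Real.sin (((k:ℝ)+1)*x)) := by rw [h1, h2]
  rw [intervalIntegral.integral_congr hcong, intervalIntegral.integral_const_mul,
    integral_sin_sin]
  by_cases h : j = k <;> simp [h] <;> ring

noncomputable def scpC (k : ℕ) : Polynomial ℂ := (scp k).map (algebraMap ℝ ℂ)

lemma scpC_monic (k : ℕ) : (scpC k).Monic := ((scp_monic_deg k).1).map _

lemma scpC_natDegree (k : ℕ) : (scpC k).natDegree = k := by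
  rw [scpC, (scp_monic_deg k).1.natDegree_map, (scp_monic_deg k).2]

lemma scpC_degree (k : ℕ) : (scpC k).degree = k := by
  rw [Polynomial.degree_eq_natDegree (scpC_monic k).ne_zero, scpC_natDegree]

lemma scpC_eval_real (k : ℕ) (x : ℝ) : (scpC k).eval (x : ℂ) = (((scp k).eval x : ℝ) : ℂ) := by
  rw [scpC, eval_map, show ((x:ℂ)) = algebraMap ℝ ℂ x from rfl, eval₂_at_apply]
  rfl

lemma scp_expand (n : ℕ) : ∀ P : Polynomial ℂ, P.degree ≤ n →
    ∃ c : ℕ → ℂ, P = ∑ k ∈ Finset.range (n+1), Polynomial.C (c k) * scpC k := by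
  induction n with
  | zero =>
    intro P hP
    refine ⟨fun _ => P.coeff 0, ?_⟩
    conv_lhs => rw [Polynomial.eq_C_of_degree_le_zero (p := P) (by exact_mod_cast hP)]
    simp [scpC, scp]
  | succ n ih =>
    intro P hP
    set a := P.coeff (n+1) with ha
    set Q := P - Polynomial.C a * scpC (n+1) with hQ
    have hQdeg : Q.degree ≤ n := by
      rw [Polynomial.degree_le_iff_coeff_zero]
      intro m hm
      have hm' : n < m := by exact_mod_cast hm
      rcases eq_or_lt_of_le (Nat.succ_le_of_lt hm') with h | h
      · -- m = n+1
        rw [hQ]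
        simp only [Polynomial.coeff_sub, Polynomial.coeff_C_mul]
        rw [← h]
        have : (scpC (n+1)).coeff (n+1) = 1 := by
          have := (scpC_monic (n+1)).coeff_natDegree
          rwa [scpC_natDegree] at this
        rw [this, mul_one, ← ha]
        exact sub_self a
      · -- m > n+1
        have h1 : P.coeff m = 0 := by
          apply Polynomial.coeff_eq_zero_of_degree_lt
          apply lt_of_le_of_lt hP
          exact_mod_cast h
        have h2 : (scpC (n+1)).coeff m = 0 := by
          apply Polynomial.coeff_eq_zero_of_degree_lt
          rw [scpC_degree]
          exact_mod_cast h
        rw [hQ]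
        simp [h1, h2]
    obtain ⟨c, hc⟩ := ih Q hQdeg
    refine ⟨fun k => if k = n+1 then a else c k, ?_⟩
    rw [Finset.sum_range_succ]
    simp only [if_pos rfl]
    have : ∑ k ∈ Finset.range (n+1), Polynomial.C (if k = n+1 then a else c k) * scpC k
        = ∑ k ∈ Finset.range (n+1), Polynomial.C (c k) * scpC k := by
      apply Finset.sum_congr rfl
      intro k hk
      rw [if_neg (Nat.ne_of_lt (Finset.mem_range.mp hk))]
    rw [this, ← hc, hQ]
    show P = P - C a * scpC (n+1) + C a * scpC (n+1)
    ring

lemma eval_sum_real (n : ℕ) (c : ℕ → ℂ) (s : ℝ) :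
    (∑ k ∈ range (n+1), Polynomial.C (c k) * scpC k).eval (s:ℂ)
      = ∑ k ∈ range (n+1), c k * (((scp k).eval s : ℝ) : ℂ) := by
  rw [Polynomial.eval_finset_sum]
  exact Finset.sum_congr rfl fun k _ => by rw [Polynomial.eval_mul, Polynomial.eval_C, scpC_eval_real]

set_option maxHeartbeats 1000000 in
lemma parseval (n : ℕ) (c : ℕ → ℂ) :
    (∫ s in (-2:ℝ)..2,
        ‖(∑ k ∈ range (n+1), Polynomial.C (c k) * scpC k).eval (s:ℂ)‖^2 * Real.sqrt (4 - s^2))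
      = 2*π * ∑ k ∈ range (n+1), ‖c k‖^2 := by
  have hpt : ∀ s : ℝ,
      ‖(∑ k ∈ range (n+1), Polynomial.C (c k) * scpC k).eval (s:ℂ)‖^2 * Real.sqrt (4 - s^2)
        = ∑ j ∈ range (n+1), ∑ k ∈ range (n+1),
            (((c j).re * (c k).re + (c j).im * (c k).im) *
              ((scp j).eval s * (scp k).eval s * Real.sqrt (4 - s^2))) := by
    intro s
    rw [eval_sum_real]
    set z := ∑ k ∈ range (n+1), c k * (((scp k).eval s : ℝ) : ℂ) with hz
    have hre : z.re = ∑ k ∈ range (n+1), (c k).re * (scp k).eval s := by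
      rw [hz, Complex.re_sum]
      exact Finset.sum_congr rfl fun k _ => by simp [Complex.mul_re]
    have him : z.im = ∑ k ∈ range (n+1), (c k).im * (scp k).eval s := by
      rw [hz, Complex.im_sum]
      exact Finset.sum_congr rfl fun k _ => by simp [Complex.mul_im]
    have hnorm : ‖z‖^2 = z.re^2 + z.im^2 := by
      rw [Complex.sq_norm, Complex.normSq_apply]; ring
    rw [hnorm, hre, him, pow_two, pow_two, Finset.sum_mul_sum, Finset.sum_mul_sum,
      add_mul, Finset.sum_mul, Finset.sum_mul, ← Finset.sum_add_distrib]
    apply Finset.sum_congr rfl; intro j _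
    rw [Finset.sum_mul, Finset.sum_mul, ← Finset.sum_add_distrib]
    apply Finset.sum_congr rfl; intro k _
    ring
  simp only [hpt]
  have hint : ∀ j k : ℕ, IntervalIntegrable
      (fun s => ((c j).re * (c k).re + (c j).im * (c k).im) *
        ((scp j).eval s * (scp k).eval s * Real.sqrt (4 - s^2))) MeasureTheory.volume (-2:ℝ) 2 := by
    intro j k
    apply Continuous.intervalIntegrable
    apply Continuous.mul continuous_const
    exact (((scp j).continuous_aeval).mul ((scp k).continuous_aeval)).mul
      (Real.continuous_sqrt.comp (by fun_prop))
  have hG : (∫ s in (-2:ℝ)..2, ∑ j ∈ range (n+1), ∑ k ∈ range (n+1),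
      (((c j).re * (c k).re + (c j).im * (c k).im) *
        ((scp j).eval s * (scp k).eval s * Real.sqrt (4 - s^2))))
      = ∑ j ∈ range (n+1), ∑ k ∈ range (n+1),
        (∫ s in (-2:ℝ)..2, (((c j).re * (c k).re + (c j).im * (c k).im) *
          ((scp j).eval s * (scp k).eval s * Real.sqrt (4 - s^2)))) := by
    calc (∫ s in (-2:ℝ)..2, ∑ j ∈ range (n+1), ∑ k ∈ range (n+1),
          (((c j).re * (c k).re + (c j).im * (c k).im) *
            ((scp j).eval s * (scp k).eval s * Real.sqrt (4 - s^2))))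
        = ∫ s in (-2:ℝ)..2, ∑ p ∈ (range (n+1)) ×ˢ (range (n+1)),
            (((c p.1).re * (c p.2).re + (c p.1).im * (c p.2).im) *
              ((scp p.1).eval s * (scp p.2).eval s * Real.sqrt (4 - s^2))) := by
          apply intervalIntegral.integral_congr
          intro s _
          exact (Finset.sum_product' (f := fun j k =>
            (((c j).re * (c k).re + (c j).im * (c k).im) *
              ((scp j).eval s * (scp k).eval s * Real.sqrt (4 - s^2)))) _ _).symm
      _ = ∑ p ∈ (range (n+1)) ×ˢ (range (n+1)),
            ∫ s in (-2:ℝ)..2, (((c p.1).re * (c p.2).re + (c p.1).im * (c p.2).im) *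
              ((scp p.1).eval s * (scp p.2).eval s * Real.sqrt (4 - s^2))) :=
          intervalIntegral.integral_finset_sum (fun p _ => hint p.1 p.2)
      _ = ∑ j ∈ range (n+1), ∑ k ∈ range (n+1),
            (∫ s in (-2:ℝ)..2, (((c j).re * (c k).re + (c j).im * (c k).im) *
              ((scp j).eval s * (scp k).eval s * Real.sqrt (4 - s^2)))) :=
          Finset.sum_product' (f := fun j k => ∫ s in (-2:ℝ)..2,
            (((c j).re * (c k).re + (c j).im * (c k).im) *
              ((scp j).eval s * (scp k).eval s * Real.sqrt (4 - s^2)))) _ _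
  rw [hG]
  have hjk : ∀ j ∈ range (n+1),
      (∑ k ∈ range (n+1), ∫ s in (-2:ℝ)..2, (((c j).re * (c k).re + (c j).im * (c k).im) *
          ((scp j).eval s * (scp k).eval s * Real.sqrt (4 - s^2))))
      = 2*π * ‖c j‖^2 := by
    intro j hj
    have : ∀ k ∈ range (n+1),
        (∫ s in (-2:ℝ)..2, ((c j).re * (c k).re + (c j).im * (c k).im) *
          ((scp j).eval s * (scp k).eval s * Real.sqrt (4 - s^2)))
        = if j = k then 2*π * ‖c j‖^2 else 0 := by
      intro k _
      rw [intervalIntegral.integral_const_mul, scp_ortho]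
      by_cases h : j = k
      · subst h
        rw [if_pos rfl, if_pos rfl]
        rw [Complex.sq_norm, Complex.normSq_apply]
        ring
      · rw [if_neg h, if_neg h, mul_zero]
    rw [Finset.sum_congr rfl this, Finset.sum_ite_eq (range (n+1)) j (fun _ => 2*π*‖c j‖^2),
      if_pos hj]
  rw [Finset.sum_congr rfl hjk, ← Finset.mul_sum]

/-- Rapid decay for the semicircular law: for every polynomial `P ∈ ℂ[X]` of
degree at most `n` and every `t ∈ [-2, 2]`,
`|P(t)| ≤ (n+1)^{3/2} ((1/(2π)) ∫_{-2}^{2} |P(s)|² √(4 − s²) ds)^{1/2}`. -/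
theorem semicircular_polynomial_rapidDecay (n : ℕ) (P : Polynomial ℂ)
    (hP : P.degree ≤ (n : ℕ)) (t : ℝ) (ht : t ∈ Set.Icc (-2 : ℝ) 2) :
    ‖P.eval (t : ℂ)‖ ≤ ((n : ℝ) + 1) ^ ((3 : ℝ) / 2) *
      Real.sqrt ((1 / (2 * Real.pi)) *
        ∫ s in (-2 : ℝ)..2, ‖P.eval (s : ℂ)‖ ^ 2 * Real.sqrt (4 - s ^ 2)) := by
  obtain ⟨c, hc⟩ := scp_expand n P hP
  subst hc
  set S := ∑ k ∈ range (n+1), ‖c k‖^2 with hS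
  have hSnn : 0 ≤ S := Finset.sum_nonneg fun k _ => by positivity
  have hI : (∫ s in (-2:ℝ)..2,
      ‖(∑ k ∈ range (n+1), Polynomial.C (c k) * scpC k).eval (s:ℂ)‖^2 * Real.sqrt (4 - s^2))
      = 2*π*S := parseval n c
  have hRHS : (1 / (2 * Real.pi)) * (2*π*S) = S := by
    field_simp
  -- pointwise bound
  have hA : ‖(∑ k ∈ range (n+1), Polynomial.C (c k) * scpC k).eval (t:ℂ)‖
      ≤ ∑ k ∈ range (n+1), ‖c k‖ * ((k:ℝ)+1) := by
    rw [eval_sum_real]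
    calc ‖∑ k ∈ range (n+1), c k * (((scp k).eval t : ℝ) : ℂ)‖
        ≤ ∑ k ∈ range (n+1), ‖c k * (((scp k).eval t : ℝ) : ℂ)‖ := norm_sum_le _ _
      _ ≤ ∑ k ∈ range (n+1), ‖c k‖ * ((k:ℝ)+1) := by
          apply Finset.sum_le_sum
          intro k _
          rw [norm_mul, Complex.norm_real, Real.norm_eq_abs]
          exact mul_le_mul_of_nonneg_left (scp_abs_le k t ht) (norm_nonneg _)
  have hCS : (∑ k ∈ range (n+1), ‖c k‖ * ((k:ℝ)+1))^2 ≤ S * (((n:ℝ)+1)^3) := by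
    calc (∑ k ∈ range (n+1), ‖c k‖ * ((k:ℝ)+1))^2
        ≤ (∑ k ∈ range (n+1), ‖c k‖^2) * (∑ k ∈ range (n+1), ((k:ℝ)+1)^2) :=
          Finset.sum_mul_sq_le_sq_mul_sq _ _ _
      _ ≤ S * (((n:ℝ)+1)^3) := by
          apply mul_le_mul_of_nonneg_left _ hSnn
          calc (∑ k ∈ range (n+1), ((k:ℝ)+1)^2)
              ≤ ∑ _k ∈ range (n+1), ((n:ℝ)+1)^2 := by
                apply Finset.sum_le_sum
                intro k hk
                have hkn : (k:ℝ) + 1 ≤ (n:ℝ) + 1 := by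
                  have := Nat.lt_succ_iff.mp (Finset.mem_range.mp hk)
                  exact_mod_cast Nat.succ_le_succ this
                exact pow_le_pow_left₀ (by positivity) hkn 2
            _ = ((n:ℝ)+1)^3 := by
                rw [Finset.sum_const, Finset.card_range]
                push_cast
                ring
  have hpow : ((n:ℝ)+1) ^ ((3:ℝ)/2) = Real.sqrt (((n:ℝ)+1)^3) := by
    rw [show (3:ℝ)/2 = (3:ℝ) * (1/2) by ring, Real.rpow_mul (by positivity),
      show (3:ℝ) = ((3:ℕ):ℝ) by norm_num, Real.rpow_natCast,
      Real.sqrt_eq_rpow]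
  calc ‖(∑ k ∈ range (n+1), Polynomial.C (c k) * scpC k).eval (t:ℂ)‖
      ≤ ∑ k ∈ range (n+1), ‖c k‖ * ((k:ℝ)+1) := hA
    _ ≤ Real.sqrt (S * (((n:ℝ)+1)^3)) := by
        rw [Real.le_sqrt (Finset.sum_nonneg fun k _ => by positivity) (by positivity)]
        exact hCS
    _ = ((n:ℝ)+1) ^ ((3:ℝ)/2) * Real.sqrt S := by
        rw [mul_comm S, Real.sqrt_mul (by positivity), hpow]
    _ = ((n:ℝ)+1) ^ ((3:ℝ)/2) * Real.sqrt ((1 / (2 * Real.pi)) *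
        ∫ s in (-2 : ℝ)..2,
          ‖(∑ k ∈ range (n+1), Polynomial.C (c k) * scpC k).eval (s:ℂ)‖ ^ 2 *
            Real.sqrt (4 - s ^ 2)) := by
        rw [hI, hRHS]
end
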